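/- arXiv:2310.10866 — 3 statements merged into one kernel-verified Lean document; each statement's English description precedes it below -/
import Mathlib

section
/- For d ∈ {2,3}, a finite set of points x₁,…,x_K in ℝ^d, and α ∈ (−d, d), the function ϱ_α(x) = max_{1≤k≤K} |x − x_k|^α belongs to the Muckenhoupt class A₂ on ℝ^d. -/
open MeasureTheory ENNReal

/-- The Muckenhoupt A₂ characteristic of a weight `ω` on `ℝ^d`. -/
noncomputable def A2char (d : ℕ) (ω : EuclideanSpace ℝ (Fin d) → ℝ≥0∞) : ℝ≥0∞ :=
  ⨆ (x : EuclideanSpace ℝ (Fin d)) (r : ℝ) (_ : 0 < r),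
    (⨍⁻ y in Metric.ball x r, ω y ∂volume) * (⨍⁻ y in Metric.ball x r, (ω y)⁻¹ ∂volume)

section A2Auxiliary

namespace A2Aux

open Metric

noncomputable section

variable {d : ℕ}

def W (d : ℕ) (β : ℝ) (y : EuclideanSpace ℝ (Fin d)) : ℝ≥0∞ := (ENNReal.ofReal ‖y‖) ^ β

lemma measW (β : ℝ) : Measurable (W d β) :=
  ENNReal.continuous_rpow_const.measurable.comp
    (ENNReal.measurable_ofReal.comp continuous_norm.measurable)

lemma rpow_ne_top {x : ℝ≥0∞} (hx0 : x ≠ 0) (hxt : x ≠ ⊤) (b : ℝ) : x ^ b ≠ ⊤ := by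
  simp [ENNReal.rpow_eq_top_iff, hx0, hxt]

lemma rpow_anti {x y : ℝ≥0∞} (h : x ≤ y) {β : ℝ} (hβ : β ≤ 0) : y ^ β ≤ x ^ β := by
  have hx : x ^ β = (x ^ (-β))⁻¹ := by rw [← ENNReal.rpow_neg, neg_neg]
  have hy : y ^ β = (y ^ (-β))⁻¹ := by rw [← ENNReal.rpow_neg, neg_neg]
  rw [hx, hy]
  exact ENNReal.inv_le_inv.mpr (ENNReal.rpow_le_rpow h (neg_nonneg.2 hβ))

def J (d : ℕ) (β : ℝ) : ℝ≥0∞ := ∫⁻ y in ball (0 : EuclideanSpace ℝ (Fin d)) 1, W d β y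

lemma J_lt_top (hd : 0 < d) {β : ℝ} (hβ : -(d:ℝ) < β) : J d β < ⊤ := by
  haveI : Nonempty (Fin d) := ⟨⟨0, hd⟩⟩
  rcases le_or_gt 0 β with h0 | h0
  · calc J d β ≤ ∫⁻ _ in ball (0 : EuclideanSpace ℝ (Fin d)) 1, 1 ∂volume := by
          refine setLIntegral_mono' measurableSet_ball fun y hy => ?_
          exact ENNReal.rpow_le_one (ENNReal.ofReal_le_one.2 (mem_ball_zero_iff.1 hy).le) h0
      _ = volume (ball (0 : EuclideanSpace ℝ (Fin d)) 1) := setLIntegral_one _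
      _ < ⊤ := measure_ball_lt_top
  · set μ₁ := volume (ball (0 : EuclideanSpace ℝ (Fin d)) 1) with hμ₁
    set q : ℝ≥0∞ := ENNReal.ofReal (2⁻¹ : ℝ) with hq
    have hq0 : q ≠ 0 := by simp [hq]
    have hqt : q ≠ ⊤ := ofReal_ne_top
    set c : ℕ → ℝ≥0∞ := fun n => (ENNReal.ofReal ((2⁻¹:ℝ) ^ (n+1))) ^ β with hcdef
    have hone : ∀ n : ℕ, (1:ℝ≥0∞) ≤ c n := by
      intro n
      have := rpow_anti (x := ENNReal.ofReal ((2⁻¹:ℝ) ^ (n+1))) (y := 1)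
        (by rw [ENNReal.ofReal_le_one]; apply pow_le_one₀ <;> norm_num) h0.le
      rwa [ENNReal.one_rpow] at this
    have hpt : ∀ y ∈ ball (0 : EuclideanSpace ℝ (Fin d)) 1,
        W d β y ≤ ∑' n : ℕ, (ball (0 : EuclideanSpace ℝ (Fin d)) ((2⁻¹:ℝ)^n)).indicator
          (fun _ => c n) y := by
      intro y hy
      rcases eq_or_ne y 0 with rfl | hy0
      · refine le_trans le_top ?_
        have h1 : ∀ n : ℕ, (1:ℝ≥0∞) ≤ (ball (0 : EuclideanSpace ℝ (Fin d)) ((2⁻¹:ℝ)^n)).indicator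
            (fun _ => c n) 0 := by
          intro n
          rw [Set.indicator_of_mem (mem_ball_self (by positivity))]
          exact hone n
        calc (⊤:ℝ≥0∞) = ∑' _ : ℕ, (1:ℝ≥0∞) := (ENNReal.tsum_const_eq_top_of_ne_zero one_ne_zero).symm
          _ ≤ _ := Summable.tsum_le_tsum h1 ENNReal.summable ENNReal.summable
      · have hny : 0 < ‖y‖ := norm_pos_iff.2 hy0
        have hex : ∃ n : ℕ, (2⁻¹:ℝ) ^ (n+1) ≤ ‖y‖ := by
          obtain ⟨n, hn⟩ := exists_pow_lt_of_lt_one hny (by norm_num : (2⁻¹:ℝ) < 1)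
          exact ⟨n, le_of_lt (lt_of_le_of_lt (by apply pow_le_pow_of_le_one <;> norm_num) hn)⟩
        have h1 : (2⁻¹:ℝ) ^ (Nat.find hex + 1) ≤ ‖y‖ := Nat.find_spec hex
        have h2 : ‖y‖ < (2⁻¹:ℝ) ^ (Nat.find hex) := by
          rcases Nat.eq_zero_or_pos (Nat.find hex) with h | h
          · rw [h]; simpa using mem_ball_zero_iff.1 hy
          · have hm := Nat.find_min hex (Nat.sub_lt h Nat.one_pos)
            push_neg at hm
            calc ‖y‖ < 2⁻¹ ^ (Nat.find hex - 1 + 1) := hm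
              _ = _ := by rw [Nat.sub_add_cancel h]
        refine le_trans ?_ (ENNReal.le_tsum (Nat.find hex))
        rw [Set.indicator_of_mem (mem_ball_zero_iff.2 h2)]
        exact rpow_anti (ENNReal.ofReal_le_ofReal h1) h0.le
    have hconv : ∑' n : ℕ, c n * volume (ball (0 : EuclideanSpace ℝ (Fin d)) ((2⁻¹:ℝ)^n)) < ⊤ := by
      have hterm : ∀ n : ℕ, c n * volume (ball (0 : EuclideanSpace ℝ (Fin d)) ((2⁻¹:ℝ)^n))
          = (q ^ β * μ₁) * (q ^ ((d:ℝ) + β)) ^ n := by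
        intro n
        rw [Measure.addHaar_ball _ _ (by positivity), finrank_euclideanSpace_fin]
        have hball : ENNReal.ofReal (((2⁻¹:ℝ) ^ n) ^ d) = q ^ (((n * d : ℕ)) : ℝ) := by
          rw [← pow_mul, ENNReal.ofReal_pow (by norm_num : (0:ℝ) ≤ 2⁻¹), ← ENNReal.rpow_natCast]
        have hcn : c n = q ^ (((n:ℝ) + 1) * β) := by
          show (ENNReal.ofReal ((2⁻¹:ℝ) ^ (n+1))) ^ β = _
          rw [ENNReal.ofReal_pow (by norm_num : (0:ℝ) ≤ 2⁻¹), ← ENNReal.rpow_natCast,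
            ← ENNReal.rpow_mul]
          push_cast
          ring_nf
          norm_num [hq]
        rw [hball, hcn, ← hμ₁]
        rw [← ENNReal.rpow_natCast (q ^ ((d:ℝ) + β)) n, ← ENNReal.rpow_mul]
        rw [← mul_assoc, mul_comm (q ^ (((n:ℝ)+1)*β)) (q ^ (((n*d:ℕ):ℝ)))]
        rw [← ENNReal.rpow_add _ _ hq0 hqt]
        rw [mul_right_comm, ← ENNReal.rpow_add _ _ hq0 hqt]
        congr 2
        push_cast
        ring
      rw [tsum_congr hterm, ENNReal.tsum_mul_left, ENNReal.tsum_geometric]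
      have hlt1 : q ^ ((d:ℝ) + β) < 1 := by
        refine ENNReal.rpow_lt_one ?_ (by linarith)
        rw [hq, ENNReal.ofReal_lt_one]; norm_num
      refine ENNReal.mul_lt_top (ENNReal.mul_lt_top ?_ measure_ball_lt_top) ?_
      · exact (rpow_ne_top hq0 hqt β).lt_top
      · rw [ENNReal.inv_lt_top]
        exact tsub_pos_iff_lt.2 hlt1
    calc J d β ≤ ∫⁻ y in ball (0 : EuclideanSpace ℝ (Fin d)) 1,
          (∑' n : ℕ, (ball (0 : EuclideanSpace ℝ (Fin d)) ((2⁻¹:ℝ)^n)).indicator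
            (fun _ => c n) y) ∂volume := setLIntegral_mono' measurableSet_ball hpt
      _ = ∑' n : ℕ, ∫⁻ y in ball (0 : EuclideanSpace ℝ (Fin d)) 1,
          (ball (0 : EuclideanSpace ℝ (Fin d)) ((2⁻¹:ℝ)^n)).indicator (fun _ => c n) y ∂volume :=
          lintegral_tsum fun n => (measurable_const.indicator measurableSet_ball).aemeasurable
      _ ≤ ∑' n : ℕ, ∫⁻ y, (ball (0 : EuclideanSpace ℝ (Fin d)) ((2⁻¹:ℝ)^n)).indicator
          (fun _ => c n) y ∂volume :=
          Summable.tsum_le_tsum (fun n => setLIntegral_le_lintegral _ _) ENNReal.summable ENNReal.summable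
      _ = ∑' n : ℕ, c n * volume (ball (0 : EuclideanSpace ℝ (Fin d)) ((2⁻¹:ℝ)^n)) := by
          congr 1; ext n
          rw [lintegral_indicator measurableSet_ball, setLIntegral_const]
      _ < ⊤ := hconv

lemma scale {R : ℝ} (hR : 0 < R) (β : ℝ) :
    ∫⁻ y in ball (0 : EuclideanSpace ℝ (Fin d)) R, W d β y =
      ENNReal.ofReal R ^ ((d:ℝ) + β) * J d β := by
  set μ : Measure (EuclideanSpace ℝ (Fin d)) := volume
  have hmap : Measure.map (fun z : EuclideanSpace ℝ (Fin d) => R • z) μ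
      = ENNReal.ofReal ((R ^ d)⁻¹) • μ := by
    rw [Measure.map_addHaar_smul μ hR.ne']
    congr 2
    rw [finrank_euclideanSpace_fin, abs_of_pos (by positivity)]
  have hpre : (fun z : EuclideanSpace ℝ (Fin d) => R • z) ⁻¹' (ball 0 R) = ball 0 1 := by
    ext z
    simp only [Set.mem_preimage, mem_ball, dist_zero_right, norm_smul, Real.norm_eq_abs,
      abs_of_pos hR]
    constructor
    · intro h; nlinarith [norm_nonneg z]
    · intro h; nlinarith [norm_nonneg z]
  have key : ∫⁻ y in ball (0 : EuclideanSpace ℝ (Fin d)) R, W d β y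
        ∂(Measure.map (fun z : EuclideanSpace ℝ (Fin d) => R • z) μ)
      = ∫⁻ z in ball (0 : EuclideanSpace ℝ (Fin d)) 1, W d β (R • z) ∂μ := by
    rw [setLIntegral_map measurableSet_ball (measW β) (measurable_const_smul R), hpre]
  have hW : ∀ z : EuclideanSpace ℝ (Fin d), W d β (R • z) = ENNReal.ofReal R ^ β * W d β z := by
    intro z
    simp only [W, norm_smul, Real.norm_eq_abs, abs_of_pos hR,
      ENNReal.ofReal_mul hR.le]
    rw [ENNReal.mul_rpow_of_ne_top ofReal_ne_top ofReal_ne_top]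
  have hrne : ENNReal.ofReal R ^ β ≠ ⊤ :=
    rpow_ne_top (by simpa using hR) ofReal_ne_top β
  rw [hmap] at key
  rw [Measure.restrict_smul, lintegral_smul_measure] at key
  simp only [hW] at key
  rw [lintegral_const_mul' _ _ hrne] at key
  -- key : c * I(R) = (ofReal R)^β * J
  have hc0 : (ENNReal.ofReal ((R ^ d)⁻¹)) ≠ 0 := by
    simp [ENNReal.ofReal_eq_zero]; positivity
  have := congrArg (fun t => (ENNReal.ofReal ((R ^ d)⁻¹))⁻¹ * t) key
  rw [smul_eq_mul, ← mul_assoc, ENNReal.inv_mul_cancel hc0 ofReal_ne_top, one_mul] at this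
  rw [this, ← mul_assoc]
  congr 1
  rw [← ENNReal.ofReal_inv_of_pos (by positivity), inv_inv,
    ENNReal.ofReal_pow hR.le, ENNReal.rpow_add _ _ (by simpa using hR) ofReal_ne_top,
    ENNReal.rpow_natCast]

/-- Average bounded by a pointwise bound. -/
lemma lav_le {s : Set (EuclideanSpace ℝ (Fin d))} (hs0 : volume s ≠ 0) (hst : volume s ≠ ⊤)
    (hms : MeasurableSet s) {f : EuclideanSpace ℝ (Fin d) → ℝ≥0∞} {c : ℝ≥0∞}
    (h : ∀ y ∈ s, f y ≤ c) : ⨍⁻ y in s, f y ∂volume ≤ c := by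
  rw [setLAverage_eq]
  have h1 : ∫⁻ y in s, f y ∂volume ≤ c * volume s :=
    le_trans (setLIntegral_mono' hms h) (le_of_eq (setLIntegral_const _ _))
  refine le_trans (ENNReal.div_le_div_right h1 _) (le_of_eq ?_)
  rw [div_eq_mul_inv, mul_assoc, ENNReal.mul_inv_cancel hs0 hst, mul_one]

lemma single_bound (hd : 0 < d) {α : ℝ} (hα : α ∈ Set.Ioo (-(d:ℝ)) (d:ℝ)) :
    ∃ C : ℝ≥0∞, C ≠ ⊤ ∧ ∀ (x : EuclideanSpace ℝ (Fin d)) (r : ℝ), 0 < r →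
      (⨍⁻ y in ball x r, W d α y ∂volume) * (⨍⁻ y in ball x r, W d (-α) y ∂volume) ≤ C := by
  haveI : Nonempty (Fin d) := ⟨⟨0, hd⟩⟩
  obtain ⟨hα1, hα2⟩ := hα
  set μ₁ := volume (ball (0 : EuclideanSpace ℝ (Fin d)) 1) with hμ₁
  have hμ10 : μ₁ ≠ 0 := (measure_ball_pos _ _ one_pos).ne'
  have hμ1t : μ₁ ≠ ⊤ := measure_ball_lt_top.ne
  set b3 : ℝ≥0∞ := ENNReal.ofReal 3 with hb3
  have hb30 : b3 ≠ 0 := by simp [hb3]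
  have hb3t : b3 ≠ ⊤ := ofReal_ne_top
  set Cfar : ℝ≥0∞ := b3 ^ |α| * b3 ^ |α| with hCfar
  set Cnear : ℝ≥0∞ := b3 ^ (2*(d:ℝ)) * (J d α * J d (-α)) * (μ₁⁻¹ * μ₁⁻¹) with hCnear
  refine ⟨Cfar + Cnear, ?_, ?_⟩
  · have h1 : Cfar ≠ ⊤ :=
      ENNReal.mul_ne_top (rpow_ne_top hb30 hb3t _) (rpow_ne_top hb30 hb3t _)
    have h2 : Cnear ≠ ⊤ := by
      refine ENNReal.mul_ne_top (ENNReal.mul_ne_top (rpow_ne_top hb30 hb3t _)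
        (ENNReal.mul_ne_top (J_lt_top hd hα1).ne (J_lt_top hd (by linarith)).ne)) ?_
      exact ENNReal.mul_ne_top (ENNReal.inv_ne_top.2 hμ10) (ENNReal.inv_ne_top.2 hμ10)
    simp [h1, h2]
  intro x r hr
  have hB0 : volume (ball x r) ≠ 0 := (measure_ball_pos _ _ hr).ne'
  have hBt : volume (ball x r) ≠ ⊤ := measure_ball_lt_top.ne
  rcases le_or_gt (2*r) ‖x‖ with hfar | hnear
  · -- far case
    set a : ℝ := ‖x‖ - r with ha
    have ha0 : 0 < a := by simp only [ha]; linarith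
    have hua0 : ENNReal.ofReal a ≠ 0 := by simp [ha0]
    have huat : ENNReal.ofReal a ≠ ⊤ := ofReal_ne_top
    have hbd : ∀ β : ℝ, ∀ y ∈ ball x r, W d β y ≤ b3 ^ |β| * (ENNReal.ofReal a) ^ β := by
      intro β y hy
      have hyx : ‖y - x‖ < r := by rwa [mem_ball_iff_norm] at hy
      have habs := abs_le.1 ((abs_norm_sub_norm_le y x).trans hyx.le)
      have hyl : a ≤ ‖y‖ := by simp only [ha]; linarith [habs.1]
      have hyu : ‖y‖ ≤ 3 * a := by simp only [ha]; linarith [habs.2]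
      rcases le_or_gt 0 β with h0 | h0
      · calc W d β y ≤ (ENNReal.ofReal (3 * a)) ^ β :=
              ENNReal.rpow_le_rpow (ENNReal.ofReal_le_ofReal hyu) h0
          _ = b3 ^ β * (ENNReal.ofReal a) ^ β := by
              rw [ENNReal.ofReal_mul (by norm_num), hb3,
                ENNReal.mul_rpow_of_ne_top ofReal_ne_top ofReal_ne_top]
          _ ≤ b3 ^ |β| * (ENNReal.ofReal a) ^ β := by rw [abs_of_nonneg h0]
      · calc W d β y ≤ (ENNReal.ofReal a) ^ β :=
              rpow_anti (ENNReal.ofReal_le_ofReal hyl) h0.le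
          _ ≤ b3 ^ |β| * (ENNReal.ofReal a) ^ β := by
              refine le_mul_of_one_le_left zero_le ?_
              calc (1:ℝ≥0∞) = 1 ^ |β| := (ENNReal.one_rpow _).symm
                _ ≤ b3 ^ |β| :=
                  ENNReal.rpow_le_rpow (by rw [hb3]; exact ENNReal.one_le_ofReal.2 (by norm_num))
                    (abs_nonneg β)
    have hAa : (⨍⁻ y in ball x r, W d α y ∂volume) ≤ b3 ^ |α| * (ENNReal.ofReal a) ^ α :=
      lav_le hB0 hBt measurableSet_ball (hbd α)
    have hAm : (⨍⁻ y in ball x r, W d (-α) y ∂volume) ≤ b3 ^ |α| * (ENNReal.ofReal a) ^ (-α) := by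
      have := lav_le hB0 hBt measurableSet_ball (hbd (-α))
      rwa [abs_neg] at this
    refine le_trans (mul_le_mul' hAa hAm) (le_trans (le_of_eq ?_) le_self_add)
    rw [mul_mul_mul_comm, ← ENNReal.rpow_add _ _ hua0 huat, add_neg_cancel, ENNReal.rpow_zero,
      mul_one, hCfar]
  · -- near case
    have hsub : ball x r ⊆ ball (0 : EuclideanSpace ℝ (Fin d)) (3*r) := by
      intro y hy
      have hyx : ‖y - x‖ < r := by rwa [mem_ball_iff_norm] at hy
      rw [mem_ball_zero_iff]
      calc ‖y‖ = ‖(y - x) + x‖ := by rw [sub_add_cancel]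
        _ ≤ ‖y - x‖ + ‖x‖ := norm_add_le _ _
        _ < 3 * r := by linarith
    have hint : ∀ β : ℝ, (⨍⁻ y in ball x r, W d β y ∂volume)
        ≤ (ENNReal.ofReal (3*r)) ^ ((d:ℝ) + β) * J d β / volume (ball x r) := by
      intro β
      rw [setLAverage_eq]
      refine ENNReal.div_le_div_right ?_ _
      refine le_trans (lintegral_mono_set hsub) (le_of_eq ?_)
      exact scale (by linarith) β
    set u : ℝ≥0∞ := ENNReal.ofReal r with hu
    have hu0 : u ≠ 0 := by simp [hu, hr]
    have hut : u ≠ ⊤ := ofReal_ne_top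
    have h3r0 : ENNReal.ofReal (3*r) ≠ 0 := (ENNReal.ofReal_pos.2 (by linarith)).ne'
    have h3rt : ENNReal.ofReal (3*r) ≠ ⊤ := ofReal_ne_top
    have hμB : (volume (ball x r))⁻¹ = u ^ (-(d:ℝ)) * μ₁⁻¹ := by
      rw [Measure.addHaar_ball (volume : Measure (EuclideanSpace ℝ (Fin d))) x hr.le,
        finrank_euclideanSpace_fin, ← hμ₁]
      rw [ENNReal.ofReal_pow hr.le, ← hu, ← ENNReal.rpow_natCast,
        ENNReal.mul_inv (Or.inr hμ1t) (Or.inl (rpow_ne_top hu0 hut _)),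
        ← ENNReal.rpow_neg]
    refine le_trans (mul_le_mul' (hint α) (hint (-α))) (le_trans (le_of_eq ?_) le_add_self)
    rw [div_eq_mul_inv, div_eq_mul_inv, hμB]
    have hsplit : ∀ β : ℝ, (ENNReal.ofReal (3*r)) ^ ((d:ℝ) + β) = b3 ^ ((d:ℝ)+β) * u ^ ((d:ℝ)+β) := by
      intro β
      rw [ENNReal.ofReal_mul (by norm_num), hb3, ← hu,
        ENNReal.mul_rpow_of_ne_top ofReal_ne_top ofReal_ne_top]
    rw [hsplit, hsplit, hCnear]
    have collect : (b3 ^ ((d:ℝ)+α) * u ^ ((d:ℝ)+α) * J d α * (u ^ (-(d:ℝ)) * μ₁⁻¹))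
        * (b3 ^ ((d:ℝ)+(-α)) * u ^ ((d:ℝ)+(-α)) * J d (-α) * (u ^ (-(d:ℝ)) * μ₁⁻¹))
        = (b3 ^ ((d:ℝ)+α) * b3 ^ ((d:ℝ)+(-α)))
          * (u ^ ((d:ℝ)+α) * u ^ ((d:ℝ)+(-α)) * u ^ (-(d:ℝ)) * u ^ (-(d:ℝ)))
          * (J d α * J d (-α)) * (μ₁⁻¹ * μ₁⁻¹) := by ring
    rw [collect, ← ENNReal.rpow_add _ _ hb30 hb3t,
      ← ENNReal.rpow_add _ _ hu0 hut, ← ENNReal.rpow_add _ _ hu0 hut,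
      ← ENNReal.rpow_add _ _ hu0 hut]
    rw [show (d:ℝ) + α + ((d:ℝ) + (-α)) = 2*(d:ℝ) by ring,
      show 2*(d:ℝ) + (-(d:ℝ)) + (-(d:ℝ)) = 0 by ring,
      ENNReal.rpow_zero, mul_one]

end

end A2Aux

end A2Auxiliary

open A2Aux

/-- for `d ∈ {2,3}`, finitely many points `x₁,…,x_K ⊂ ℝ^d` and
`α ∈ (-d,d)`, the weight `ϱ_α(x) = max_k |x - x_k|^α` belongs to `A₂`. -/
theorem dist_power_weight_mem_A2 (d K : ℕ) (hd : d = 2 ∨ d = 3) (hK : 0 < K)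
    (xs : Fin K → EuclideanSpace ℝ (Fin d)) (α : ℝ)
    (hα : α ∈ Set.Ioo (-(d : ℝ)) (d : ℝ)) :
    A2char d (fun x => ⨆ k : Fin K, (ENNReal.ofReal ‖x - xs k‖) ^ α) < ⊤ := by
  have hd0 : 0 < d := by rcases hd with h | h <;> omega
  obtain ⟨C, hCt, hCb⟩ := single_bound hd0 hα
  have hmeas : ∀ (k : Fin K) (β : ℝ),
      Measurable (fun y : EuclideanSpace ℝ (Fin d) => W d β (y - xs k)) :=
    fun k β => (measW β).comp (measurable_id.sub measurable_const)
  -- translated single bound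
  have hk : ∀ (k : Fin K) (x : EuclideanSpace ℝ (Fin d)) (r : ℝ), 0 < r →
      (⨍⁻ y in Metric.ball x r, W d α (y - xs k) ∂volume) *
        (⨍⁻ y in Metric.ball x r, W d (-α) (y - xs k) ∂volume) ≤ C := by
    intro k x r hr
    have ht : ∀ β : ℝ, (⨍⁻ y in Metric.ball x r, W d β (y - xs k) ∂volume)
        = ⨍⁻ z in Metric.ball (x - xs k) r, W d β z ∂volume := by
      intro β
      rw [setLAverage_eq, setLAverage_eq]
      have hpre : (fun y : EuclideanSpace ℝ (Fin d) => y - xs k) ⁻¹'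
          (Metric.ball (x - xs k) r) = Metric.ball x r := by
        ext y
        simp [Metric.mem_ball, dist_eq_norm, sub_sub_sub_cancel_right]
      congr 1
      · rw [← (measurePreserving_sub_right volume (xs k)).setLIntegral_comp_preimage
          measurableSet_ball (measW β), hpre]
      · simp only [Measure.addHaar_ball_center]
    rw [ht α, ht (-α)]
    exact hCb _ r hr
  refine lt_of_le_of_lt (a := A2char d _) (b := (K : ℝ≥0∞) * C)
    (iSup_le fun x => iSup_le fun r => iSup_le fun hr => ?_)
    (ENNReal.mul_lt_top (ENNReal.natCast_lt_top K) hCt.lt_top)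
  have hB0 : volume (Metric.ball x r) ≠ 0 := (Metric.measure_ball_pos _ _ hr).ne'
  -- the sup weight and its inverse
  have hsum : (⨍⁻ y in Metric.ball x r, (⨆ k : Fin K, W d α (y - xs k)) ∂volume)
      ≤ ∑ k : Fin K, ⨍⁻ y in Metric.ball x r, W d α (y - xs k) ∂volume := by
    simp only [setLAverage_eq]
    simp only [div_eq_mul_inv, ← Finset.sum_mul]
    refine mul_le_mul_left ?_ _
    rw [← lintegral_finset_sum' _ (fun k _ => (hmeas k α).aemeasurable)]
    refine lintegral_mono fun y => ?_
    exact iSup_le fun k => Finset.single_le_sum (f := fun j => W d α (y - xs j)) (fun _ _ => zero_le) (Finset.mem_univ k)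
  have hinv : ∀ k : Fin K,
      (⨍⁻ y in Metric.ball x r, (⨆ j : Fin K, W d α (y - xs j))⁻¹ ∂volume)
        ≤ ⨍⁻ y in Metric.ball x r, W d (-α) (y - xs k) ∂volume := by
    intro k
    simp only [setLAverage_eq]
    refine ENNReal.div_le_div_right (lintegral_mono fun y => ?_) _
    calc (⨆ j : Fin K, W d α (y - xs j))⁻¹ ≤ (W d α (y - xs k))⁻¹ :=
          ENNReal.inv_le_inv.2 (le_iSup (fun j => W d α (y - xs j)) k)
      _ = W d (-α) (y - xs k) := (ENNReal.rpow_neg _ _).symm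
  calc (⨍⁻ y in Metric.ball x r, (⨆ k : Fin K, W d α (y - xs k)) ∂volume) *
        (⨍⁻ y in Metric.ball x r, (⨆ k : Fin K, W d α (y - xs k))⁻¹ ∂volume)
      ≤ (∑ k : Fin K, ⨍⁻ y in Metric.ball x r, W d α (y - xs k) ∂volume) *
        (⨍⁻ y in Metric.ball x r, (⨆ k : Fin K, W d α (y - xs k))⁻¹ ∂volume) :=
        mul_le_mul_left hsum _
    _ = ∑ k : Fin K, (⨍⁻ y in Metric.ball x r, W d α (y - xs k) ∂volume) *
        (⨍⁻ y in Metric.ball x r, (⨆ j : Fin K, W d α (y - xs j))⁻¹ ∂volume) :=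
        Finset.sum_mul _ _ _
    _ ≤ ∑ k : Fin K, (⨍⁻ y in Metric.ball x r, W d α (y - xs k) ∂volume) *
        (⨍⁻ y in Metric.ball x r, W d (-α) (y - xs k) ∂volume) :=
        Finset.sum_le_sum fun k _ => mul_le_mul_right (hinv k) _
    _ ≤ ∑ _k : Fin K, C := Finset.sum_le_sum fun k _ => hk k x r hr
    _ = (K : ℝ≥0∞) * C := by simp [Finset.sum_const, nsmul_eq_mul]
end

section
/- Let d ∈ {2,3}, α ∈ (d−2, d), and ϱ_{−α}(x) = max_k |x − x_k|^{−α} for finitely many points x_k ∈ Ω. Then a finite sum of point forces f = Σ_{k=1}^K f_k δ_{x_k}, with f_k ∈ ℝ^d, belongs to the dual of H¹₀(ϱ_{−α}, Ω; ℝ^d). -/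
open MeasureTheory ENNReal
open scoped RealInnerProductSpace

/-- A bounded open set whose boundary is, locally, a Lipschitz graph. -/
def IsLipschitzDomain {d : ℕ} (Ω : Set (EuclideanSpace ℝ (Fin d))) : Prop :=
  IsOpen Ω ∧ Bornology.IsBounded Ω ∧
    ∀ x ∈ frontier Ω, ∃ (v : EuclideanSpace ℝ (Fin d)) (L r : ℝ), ‖v‖ = 1 ∧ 0 < r ∧
      ∀ y ∈ frontier Ω ∩ Metric.ball x r, ∀ z ∈ frontier Ω ∩ Metric.ball x r,
        |⟪v, y - z⟫| ≤ L * ‖y - z‖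


lemma aux_rpow_anti {a b : ℝ≥0∞} (σ : ℝ) (hσ : σ ≤ 0) (hab : a ≤ b) : b ^ σ ≤ a ^ σ := by
  calc b ^ σ = (b ^ (-σ))⁻¹ := by rw [← ENNReal.rpow_neg, neg_neg]
    _ ≤ (a ^ (-σ))⁻¹ := ENNReal.inv_le_inv.mpr (ENNReal.rpow_le_rpow hab (neg_nonneg.mpr hσ))
    _ = a ^ σ := by rw [← ENNReal.rpow_neg, neg_neg]

lemma aux_J_lt_top (d : ℕ) (σ R : ℝ) (hσd : -(d : ℝ) < σ) (hσ : σ < 0) (hR : 0 < R) :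
    ∫⁻ z in {z : EuclideanSpace ℝ (Fin d) | 0 < ‖z‖ ∧ ‖z‖ ≤ R},
      (ENNReal.ofReal ‖z‖) ^ σ ∂volume < ⊤ := by
  classical
  set a : ℕ → ℝ := fun j => R * (2 : ℝ)⁻¹ ^ j with ha
  have hapos : ∀ j, 0 < a j := fun j => by positivity
  set A : ℕ → Set (EuclideanSpace ℝ (Fin d)) :=
    fun j => {z | a (j + 1) < ‖z‖ ∧ ‖z‖ ≤ a j} with hA
  have hsub : {z : EuclideanSpace ℝ (Fin d) | 0 < ‖z‖ ∧ ‖z‖ ≤ R} ⊆ ⋃ j, A j := by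
    rintro z ⟨h0, hz⟩
    have hex : ∃ n, a n < ‖z‖ := by
      obtain ⟨n, hn⟩ := exists_pow_lt_of_lt_one (div_pos h0 hR) (by norm_num : (2:ℝ)⁻¹ < 1)
      exact ⟨n, by rw [ha]; rw [lt_div_iff₀' hR] at hn; exact hn⟩
    have hn := Nat.find_spec hex
    have hn0 : Nat.find hex ≠ 0 := by
      intro h
      rw [h] at hn
      simp only [ha, pow_zero, mul_one] at hn
      linarith
    obtain ⟨m, hm⟩ := Nat.exists_eq_succ_of_ne_zero hn0
    refine Set.mem_iUnion.2 ⟨m, ?_, ?_⟩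
    · rw [← Nat.succ_eq_add_one, ← hm]; exact hn
    · have := Nat.find_min hex (m := m) (by omega)
      exact not_lt.mp this
  have hAmeas : ∀ j, MeasurableSet (A j) := by
    intro j
    have : A j = (fun z : EuclideanSpace ℝ (Fin d) => ‖z‖) ⁻¹' Set.Ioc (a (j+1)) (a j) := rfl
    rw [this]
    exact measurable_norm measurableSet_Ioc
  have hAbound : ∀ j, ∫⁻ z in A j, (ENNReal.ofReal ‖z‖) ^ σ ∂volume ≤
      ENNReal.ofReal (a (j+1) ^ σ * a j ^ (d : ℕ)) * volume (Metric.ball (0 : EuclideanSpace ℝ (Fin d)) 1) := by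
    intro j
    calc ∫⁻ z in A j, (ENNReal.ofReal ‖z‖) ^ σ ∂volume
        ≤ ∫⁻ _ in A j, ENNReal.ofReal (a (j+1) ^ σ) ∂volume := by
          refine setLIntegral_mono' (hAmeas j) fun z hz => ?_
          rw [← ENNReal.ofReal_rpow_of_pos (hapos (j+1))]
          exact aux_rpow_anti σ hσ.le (ENNReal.ofReal_le_ofReal hz.1.le)
      _ = ENNReal.ofReal (a (j+1) ^ σ) * volume (A j) := setLIntegral_const _ _
      _ ≤ ENNReal.ofReal (a (j+1) ^ σ) *
            (ENNReal.ofReal (a j ^ (d : ℕ)) * volume (Metric.ball (0 : EuclideanSpace ℝ (Fin d)) 1)) := by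
          refine mul_le_mul_right ?_ _
          have hsub2 : A j ⊆ Metric.closedBall (0 : EuclideanSpace ℝ (Fin d)) (a j) := by
            intro z hz; rw [Metric.mem_closedBall, dist_zero_right]; exact hz.2
          refine (measure_mono hsub2).trans ?_
          rw [MeasureTheory.Measure.addHaar_closedBall _ _ (hapos j).le]
          simp [finrank_euclideanSpace_fin]
      _ = ENNReal.ofReal (a (j+1) ^ σ * a j ^ (d : ℕ)) * volume (Metric.ball (0 : EuclideanSpace ℝ (Fin d)) 1) := by
          rw [← mul_assoc, ← ENNReal.ofReal_mul (Real.rpow_nonneg (hapos (j+1)).le _)]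
  have hterm : ∀ j : ℕ, a (j+1) ^ σ * a j ^ (d : ℕ) =
      ((2:ℝ)⁻¹ ^ σ * R ^ (σ + d)) * ((2:ℝ)⁻¹ ^ (σ + (d:ℝ))) ^ j := by
    intro j
    have h2 : (0:ℝ) < (2:ℝ)⁻¹ ^ j := by positivity
    have hR' : (0:ℝ) < R := hR
    have e1 : a (j+1) = a j * 2⁻¹ := by rw [ha]; ring
    rw [e1, Real.mul_rpow (hapos j).le (by norm_num)]
    have e2 : a j ^ (d:ℕ) = a j ^ ((d:ℕ):ℝ) := by rw [Real.rpow_natCast]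
    rw [e2, mul_comm (a j ^ σ), mul_assoc, ← Real.rpow_add (hapos j)]
    have e3 : a j ^ (σ + (d:ℝ)) = R ^ (σ + (d:ℝ)) * ((2:ℝ)⁻¹ ^ (σ + (d:ℝ))) ^ j := by
      rw [ha]
      rw [Real.mul_rpow hR.le (by positivity)]
      congr 1
      rw [← Real.rpow_natCast ((2:ℝ)⁻¹) j, ← Real.rpow_mul (by norm_num),
        mul_comm (j:ℝ), Real.rpow_mul (by norm_num), Real.rpow_natCast]
    rw [e3]; ring
  have hq : ENNReal.ofReal ((2:ℝ)⁻¹ ^ (σ + (d:ℝ))) < 1 := by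
    rw [← ENNReal.ofReal_one]
    refine ENNReal.ofReal_lt_ofReal_iff_of_nonneg (by positivity) |>.mpr ?_
    exact Real.rpow_lt_one (by norm_num) (by norm_num) (by linarith)
  calc ∫⁻ z in {z : EuclideanSpace ℝ (Fin d) | 0 < ‖z‖ ∧ ‖z‖ ≤ R},
        (ENNReal.ofReal ‖z‖) ^ σ ∂volume
      ≤ ∫⁻ z in ⋃ j, A j, (ENNReal.ofReal ‖z‖) ^ σ ∂volume := lintegral_mono_set hsub
    _ ≤ ∑' j, ∫⁻ z in A j, (ENNReal.ofReal ‖z‖) ^ σ ∂volume := lintegral_iUnion_le _ _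
    _ ≤ ∑' j, ENNReal.ofReal (a (j+1) ^ σ * a j ^ (d : ℕ)) *
          volume (Metric.ball (0 : EuclideanSpace ℝ (Fin d)) 1) := ENNReal.tsum_le_tsum hAbound
    _ = (ENNReal.ofReal ((2:ℝ)⁻¹ ^ σ * R ^ (σ + d)) * volume (Metric.ball (0 : EuclideanSpace ℝ (Fin d)) 1)) *
          ∑' j, (ENNReal.ofReal ((2:ℝ)⁻¹ ^ (σ + (d:ℝ)))) ^ j := by
        rw [← ENNReal.tsum_mul_left]
        congr 1 with j
        rw [hterm j, ENNReal.ofReal_mul (by positivity), ENNReal.ofReal_pow (by positivity)]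
        ring
    _ < ⊤ := by
        refine ENNReal.mul_lt_top (ENNReal.mul_lt_top ENNReal.ofReal_lt_top measure_ball_lt_top) ?_
        rw [ENNReal.tsum_geometric]
        refine ENNReal.inv_lt_top.mpr ?_
        exact tsub_pos_of_lt hq


lemma seg_bound {d : ℕ} (v : EuclideanSpace ℝ (Fin d) → EuclideanSpace ℝ (Fin d))
    (hv : ContDiff ℝ (⊤ : ℕ∞) v) (x0 y : EuclideanSpace ℝ (Fin d)) (hy : v (x0 + y) = 0) :
    (‖v x0‖₊ : ℝ≥0∞) ≤ ∫⁻ t in Set.Ioc (0:ℝ) 1,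
      (‖fderiv ℝ v (x0 + t • y)‖₊ : ℝ≥0∞) * (‖y‖₊ : ℝ≥0∞) ∂volume := by
  have hvd : Differentiable ℝ v := hv.differentiable (by simp)
  set c : ℝ → EuclideanSpace ℝ (Fin d) := fun t => x0 + t • y with hc
  have hccont : Continuous c := by fun_prop
  have hder : ∀ t : ℝ, HasDerivAt (fun s => v (c s)) ((fderiv ℝ v (c t)) y) t := by
    intro t
    have h1 : HasDerivAt c y t := by
      simpa [hc] using ((hasDerivAt_id t).smul_const y).const_add x0
    exact ((hvd (c t)).hasFDerivAt).comp_hasDerivAt t h1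
  have hcont : Continuous fun t : ℝ => (fderiv ℝ v (c t)) y :=
    Continuous.clm_apply ((hv.continuous_fderiv (by simp)).comp hccont) continuous_const
  have hint : IntervalIntegrable (fun t => (fderiv ℝ v (c t)) y) volume 0 1 :=
    hcont.intervalIntegrable 0 1
  have heq : ∫ t in (0:ℝ)..1, (fderiv ℝ v (c t)) y = v (c 1) - v (c 0) :=
    intervalIntegral.integral_eq_sub_of_hasDerivAt (fun t _ => hder t) hint
  have h2 : (‖v x0‖₊ : ℝ≥0∞) = (‖∫ t in Set.Ioc (0:ℝ) 1, (fderiv ℝ v (c t)) y ∂volume‖₊ : ℝ≥0∞) := by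
    rw [← intervalIntegral.integral_of_le zero_le_one, heq]
    have hc1 : v (c 1) = 0 := by simpa [hc] using hy
    have hc0 : c 0 = x0 := by simp [hc]
    rw [hc1, hc0, zero_sub, nnnorm_neg]
  rw [h2]
  calc (‖∫ t in Set.Ioc (0:ℝ) 1, (fderiv ℝ v (c t)) y ∂volume‖₊ : ℝ≥0∞)
      ≤ ∫⁻ t in Set.Ioc (0:ℝ) 1, (‖(fderiv ℝ v (c t)) y‖₊ : ℝ≥0∞) ∂volume :=
        enorm_integral_le_lintegral_enorm _
    _ ≤ ∫⁻ t in Set.Ioc (0:ℝ) 1, (‖fderiv ℝ v (c t)‖₊ : ℝ≥0∞) * (‖y‖₊ : ℝ≥0∞) ∂volume := by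
        refine lintegral_mono fun t => ?_
        simpa [ENNReal.coe_mul] using ENNReal.coe_le_coe.mpr ((fderiv ℝ v (c t)).le_opNNNorm y)

lemma point_bound (d : ℕ) (α R : ℝ) (hR : 0 < R)
    (Ω : Set (EuclideanSpace ℝ (Fin d))) (hΩm : MeasurableSet Ω)
    (x0 : EuclideanSpace ℝ (Fin d)) (hΩR : Ω ⊆ Metric.ball x0 R)
    (v : EuclideanSpace ℝ (Fin d) → EuclideanSpace ℝ (Fin d))
    (hv : ContDiff ℝ (⊤ : ℕ∞) v) (hsupp : tsupport v ⊆ Ω) :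
    volume {y : EuclideanSpace ℝ (Fin d) | ‖y‖ ∈ Set.Icc R (2*R)} * (‖v x0‖₊ : ℝ≥0∞) ≤
      ENNReal.ofReal ((2*R)^d) *
      ((∫⁻ z in {z : EuclideanSpace ℝ (Fin d) | 0 < ‖z‖ ∧ ‖z‖ ≤ 2*R},
          (ENNReal.ofReal ‖z‖) ^ (2 - 2*(d:ℝ) + α) ∂volume) ^ (1/2 : ℝ) *
      (∫⁻ x in Ω, (‖fderiv ℝ v x‖₊ : ℝ≥0∞) ^ 2 *
          (ENNReal.ofReal ‖x - x0‖) ^ (-α) ∂volume) ^ (1/2 : ℝ)) := by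
  classical
  set w : EuclideanSpace ℝ (Fin d) → ℝ≥0∞ := fun z => ENNReal.ofReal ‖z‖ with hw
  set g : EuclideanSpace ℝ (Fin d) → ℝ≥0∞ := fun x => (‖fderiv ℝ v x‖₊ : ℝ≥0∞) with hg
  set A : Set (EuclideanSpace ℝ (Fin d)) := {y | ‖y‖ ∈ Set.Icc R (2*R)} with hA
  set S : Set (EuclideanSpace ℝ (Fin d)) := {z | 0 < ‖z‖ ∧ ‖z‖ ≤ 2*R} with hS
  have hgcont : Continuous g :=
    ENNReal.continuous_coe.comp (continuous_nnnorm.comp (hv.continuous_fderiv (by simp)))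
  have hwcont : Continuous w := ENNReal.continuous_ofReal.comp continuous_norm
  have hAmeas : MeasurableSet A := measurable_norm measurableSet_Icc
  have hSmeas : MeasurableSet S := by
    have h : S = (fun z : EuclideanSpace ℝ (Fin d) => ‖z‖) ⁻¹' Set.Ioc 0 (2*R) := rfl
    rw [h]; exact measurable_norm measurableSet_Ioc
  have hvz : ∀ x, x ∉ Ω → v x = 0 := fun x hx =>
    image_eq_zero_of_notMem_tsupport (fun h => hx (hsupp h))
  have hgz : ∀ x, x ∉ Ω → g x = 0 := by
    intro x hx
    have h2 : fderiv ℝ v x = 0 := by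
      by_contra h
      exact hx (hsupp (support_fderiv_subset ℝ h))
    simp [hg, h2]
  -- Step A : segment bound for y in the annulus A
  have hseg : ∀ y ∈ A, (‖v x0‖₊ : ℝ≥0∞) ≤
      ∫⁻ t in Set.Ioc (0:ℝ) 1, g (x0 + t • y) * w y ∂volume := by
    intro y hy
    have hyn : v (x0 + y) = 0 := by
      apply hvz
      intro hmem
      have h1 := hΩR hmem
      rw [Metric.mem_ball, dist_eq_norm, add_sub_cancel_left] at h1
      exact absurd h1 (not_lt.mpr hy.1)
    refine (seg_bound v hv x0 y hyn).trans (le_of_eq ?_)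
    refine lintegral_congr fun t => ?_
    simp only [hw, hg, ofReal_norm, enorm_eq_nnnorm]
  -- measurability of the double integrand
  have hFmeas : Measurable fun p : (EuclideanSpace ℝ (Fin d)) × ℝ =>
      g (x0 + p.2 • p.1) * w p.1 := by
    refine Measurable.mul ((hgcont.comp ?_).measurable) ((hwcont.comp continuous_fst).measurable)
    exact continuous_const.add (continuous_snd.smul continuous_fst)
  have hinner_meas : Measurable fun y : EuclideanSpace ℝ (Fin d) =>
      ∫⁻ t in Set.Ioc (0:ℝ) 1, g (x0 + t • y) * w y ∂volume := by
    refine Measurable.lintegral_prod_right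
      (f := fun (y : EuclideanSpace ℝ (Fin d)) (t : ℝ) => g (x0 + t • y) * w y) ?_
    exact hFmeas
  -- Step B : average over the annulus
  have step1 : volume A * (‖v x0‖₊ : ℝ≥0∞) ≤
      ∫⁻ y in A, ∫⁻ t in Set.Ioc (0:ℝ) 1, g (x0 + t • y) * w y ∂volume ∂volume := by
    calc volume A * (‖v x0‖₊ : ℝ≥0∞)
        = ∫⁻ _ in A, (‖v x0‖₊ : ℝ≥0∞) ∂volume := by rw [setLIntegral_const]; ring
      _ ≤ _ := setLIntegral_mono hinner_meas hseg
  -- Step C : Tonelli swap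
  have step2 : ∫⁻ y in A, ∫⁻ t in Set.Ioc (0:ℝ) 1, g (x0 + t • y) * w y ∂volume ∂volume
      = ∫⁻ t in Set.Ioc (0:ℝ) 1, ∫⁻ y in A, g (x0 + t • y) * w y ∂volume ∂volume :=
    lintegral_lintegral_swap hFmeas.aemeasurable
  -- the rescaled indicator function
  set Φ : ℝ → EuclideanSpace ℝ (Fin d) → ℝ≥0∞ := fun t z =>
    Set.indicator {z' : EuclideanSpace ℝ (Fin d) | ‖z'‖ ∈ Set.Icc (t*R) (t*(2*R))}
      (fun z => g (x0 + z) * w z) z with hΦ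
  have hΦmeas : ∀ t, Measurable (Φ t) := by
    intro t
    refine Measurable.indicator ?_ (measurable_norm measurableSet_Icc)
    exact ((hgcont.comp (continuous_const.add continuous_id)).measurable).mul hwcont.measurable
  -- Step D : change of variables z = t • y for fixed t
  have step3 : ∀ t ∈ Set.Ioc (0:ℝ) 1, ∫⁻ y in A, g (x0 + t • y) * w y ∂volume
      = ENNReal.ofReal ((t^(d+1))⁻¹) * ∫⁻ z, Φ t z ∂volume := by
    intro t ht
    have ht0 : 0 < t := ht.1
    set f : EuclideanSpace ℝ (Fin d) →ₗ[ℝ] EuclideanSpace ℝ (Fin d) := t • LinearMap.id with hf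
    have hdet : LinearMap.det f = t ^ d := by
      rw [hf, LinearMap.det_smul, LinearMap.det_id, mul_one, finrank_euclideanSpace_fin]
    have hdet0 : LinearMap.det f ≠ 0 := by rw [hdet]; positivity
    have hfeq : ⇑f = fun y : EuclideanSpace ℝ (Fin d) => t • y := by
      funext y; simp [hf]
    have hmap : Measure.map (fun y : EuclideanSpace ℝ (Fin d) => t • y)
        (volume : Measure (EuclideanSpace ℝ (Fin d)))
        = ENNReal.ofReal ((t^d)⁻¹) • (volume : Measure (EuclideanSpace ℝ (Fin d))) := by
      have h := Measure.map_linearMap_addHaar_eq_smul_addHaar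
        (volume : Measure (EuclideanSpace ℝ (Fin d))) hdet0
      rw [hdet, hfeq] at h
      rwa [abs_of_pos (by positivity : (0:ℝ) < (t^d)⁻¹)] at h
    have hsmulmeas : Measurable (fun y : EuclideanSpace ℝ (Fin d) => t • y) :=
      (continuous_const_smul t).measurable
    have e1 : ∫⁻ z, Φ t z ∂(Measure.map (fun y : EuclideanSpace ℝ (Fin d) => t • y) volume)
        = ∫⁻ y, Φ t (t • y) ∂volume := lintegral_map (hΦmeas t) hsmulmeas
    have e2 : ∀ y : EuclideanSpace ℝ (Fin d), Φ t (t • y) =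
        ENNReal.ofReal t * Set.indicator A (fun y => g (x0 + t • y) * w y) y := by
      intro y
      have hnorm : ‖t • y‖ = t * ‖y‖ := by
        rw [norm_smul, Real.norm_eq_abs, abs_of_pos ht0]
      have hwsmul : w (t • y) = ENNReal.ofReal t * w y := by
        simp only [hw]
        rw [hnorm, ENNReal.ofReal_mul ht0.le]
      by_cases hyA : y ∈ A
      · have h1 : t • y ∈ {z' : EuclideanSpace ℝ (Fin d) | ‖z'‖ ∈ Set.Icc (t*R) (t*(2*R))} := by
          simp only [Set.mem_setOf_eq, Set.mem_Icc, hnorm]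
          exact ⟨mul_le_mul_of_nonneg_left hyA.1 ht0.le,
            mul_le_mul_of_nonneg_left hyA.2 ht0.le⟩
        rw [hΦ]
        simp only []
        rw [Set.indicator_of_mem h1, Set.indicator_of_mem hyA, hwsmul]
        ring
      · have h1 : t • y ∉ {z' : EuclideanSpace ℝ (Fin d) | ‖z'‖ ∈ Set.Icc (t*R) (t*(2*R))} := by
          intro hmem
          simp only [Set.mem_setOf_eq, Set.mem_Icc, hnorm] at hmem
          exact hyA ⟨le_of_mul_le_mul_left hmem.1 ht0, le_of_mul_le_mul_left hmem.2 ht0⟩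
        rw [hΦ]
        simp only []
        rw [Set.indicator_of_notMem h1, Set.indicator_of_notMem hyA, mul_zero]
    have hindmeas : Measurable (Set.indicator A
        (fun y : EuclideanSpace ℝ (Fin d) => g (x0 + t • y) * w y)) := by
      refine Measurable.indicator ?_ hAmeas
      exact ((hgcont.comp (continuous_const.add (continuous_id.const_smul t))).measurable).mul
        hwcont.measurable
    have e3 : ∫⁻ y, Φ t (t • y) ∂volume
        = ENNReal.ofReal t * ∫⁻ y in A, g (x0 + t • y) * w y ∂volume := by
      rw [lintegral_congr e2, lintegral_const_mul _ hindmeas, lintegral_indicator hAmeas]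
    have e4 : ∫⁻ z, Φ t z ∂(Measure.map (fun y : EuclideanSpace ℝ (Fin d) => t • y) volume)
        = ENNReal.ofReal ((t^d)⁻¹) * ∫⁻ z, Φ t z ∂volume := by
      rw [hmap, lintegral_smul_measure, smul_eq_mul]
    have e5 : ENNReal.ofReal t * ∫⁻ y in A, g (x0 + t • y) * w y ∂volume
        = ENNReal.ofReal ((t^d)⁻¹) * ∫⁻ z, Φ t z ∂volume := by
      rw [← e3, ← e4, e1]
    have ht0' : ENNReal.ofReal t ≠ 0 := (ENNReal.ofReal_pos.mpr ht0).ne'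
    calc ∫⁻ y in A, g (x0 + t • y) * w y ∂volume
        = (ENNReal.ofReal t)⁻¹ *
            (ENNReal.ofReal t * ∫⁻ y in A, g (x0 + t • y) * w y ∂volume) := by
          rw [← mul_assoc, ENNReal.inv_mul_cancel ht0' ENNReal.ofReal_ne_top, one_mul]
      _ = (ENNReal.ofReal t)⁻¹ * (ENNReal.ofReal ((t^d)⁻¹) * ∫⁻ z, Φ t z ∂volume) := by rw [e5]
      _ = ENNReal.ofReal ((t^(d+1))⁻¹) * ∫⁻ z, Φ t z ∂volume := by
          rw [← mul_assoc]
          congr 1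
          rw [← ENNReal.ofReal_inv_of_pos ht0, ← ENNReal.ofReal_mul (by positivity)]
          congr 1
          rw [pow_succ, mul_inv]
          ring
  -- Step E : second Tonelli swap
  have hψmeas : Measurable fun p : ℝ × (EuclideanSpace ℝ (Fin d)) =>
      ENNReal.ofReal ((p.1^(d+1))⁻¹) * Φ p.1 p.2 := by
    refine Measurable.mul ((measurable_fst.pow_const (d+1)).inv.ennreal_ofReal) ?_
    have heq : (fun p : ℝ × (EuclideanSpace ℝ (Fin d)) => Φ p.1 p.2) =
        Set.indicator {p : ℝ × (EuclideanSpace ℝ (Fin d)) |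
            p.1 * R ≤ ‖p.2‖ ∧ ‖p.2‖ ≤ p.1 * (2*R)}
          (fun p => g (x0 + p.2) * w p.2) := by
      funext p
      rw [hΦ]
      simp only [Set.indicator_apply, Set.mem_setOf_eq, Set.mem_Icc]
    rw [heq]
    refine Measurable.indicator ?_ ?_
    · exact ((hgcont.comp (continuous_const.add continuous_snd)).measurable).mul
        ((hwcont.comp continuous_snd).measurable)
    · refine MeasurableSet.inter ?_ ?_
      · exact measurableSet_le (measurable_fst.mul_const R) (measurable_norm.comp measurable_snd)
      · exact measurableSet_le (measurable_norm.comp measurable_snd)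
          (measurable_fst.mul_const (2*R))
  have step4 : ∫⁻ t in Set.Ioc (0:ℝ) 1,
        ENNReal.ofReal ((t^(d+1))⁻¹) * ∫⁻ z, Φ t z ∂volume ∂volume
      = ∫⁻ z, ∫⁻ t in Set.Ioc (0:ℝ) 1,
          ENNReal.ofReal ((t^(d+1))⁻¹) * Φ t z ∂volume ∂volume := by
    have h1 : ∀ t : ℝ, ENNReal.ofReal ((t^(d+1))⁻¹) * ∫⁻ z, Φ t z ∂volume
        = ∫⁻ z, ENNReal.ofReal ((t^(d+1))⁻¹) * Φ t z ∂volume := fun t =>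
      (lintegral_const_mul _ (hΦmeas t)).symm
    simp_rw [h1]
    exact lintegral_lintegral_swap hψmeas.aemeasurable
  -- Step F : pointwise bound on the kernel
  have step5 : ∀ z : EuclideanSpace ℝ (Fin d),
      (∫⁻ t in Set.Ioc (0:ℝ) 1, ENNReal.ofReal ((t^(d+1))⁻¹) * Φ t z ∂volume)
      ≤ Set.indicator S (fun z => ENNReal.ofReal ((2*R)^d) *
          (g (x0 + z) * (w z) ^ (1 - (d:ℝ)))) z := by
    intro z
    set n : ℝ := ‖z‖ with hn
    have hn0 : 0 ≤ n := norm_nonneg z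
    have hiff : ∀ t : ℝ, (‖z‖ ∈ Set.Icc (t*R) (t*(2*R))) ↔ t ∈ Set.Icc (n/(2*R)) (n/R) := by
      intro t
      simp only [Set.mem_Icc, ← hn]
      constructor
      · rintro ⟨h1, h2⟩
        exact ⟨(div_le_iff₀ (by positivity)).mpr (by linarith),
          (le_div_iff₀ hR).mpr (by linarith)⟩
      · rintro ⟨h1, h2⟩
        exact ⟨by linarith [(le_div_iff₀ hR).mp h2],
          by linarith [(div_le_iff₀ (by positivity : (0:ℝ) < 2*R)).mp h1]⟩
    have hrw : ∀ t : ℝ, ENNReal.ofReal ((t^(d+1))⁻¹) * Φ t z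
        = Set.indicator (Set.Icc (n/(2*R)) (n/R)) (fun t => ENNReal.ofReal ((t^(d+1))⁻¹)) t
            * (g (x0 + z) * w z) := by
      intro t
      by_cases hc : ‖z‖ ∈ Set.Icc (t*R) (t*(2*R))
      · rw [hΦ]
        simp only []
        rw [Set.indicator_of_mem (show z ∈ {z' : EuclideanSpace ℝ (Fin d) |
            ‖z'‖ ∈ Set.Icc (t*R) (t*(2*R))} from hc),
          Set.indicator_of_mem ((hiff t).mp hc)]
      · rw [hΦ]
        simp only []
        rw [Set.indicator_of_notMem (show z ∉ {z' : EuclideanSpace ℝ (Fin d) |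
            ‖z'‖ ∈ Set.Icc (t*R) (t*(2*R))} from hc),
          Set.indicator_of_notMem (fun hmem => hc ((hiff t).mpr hmem)), mul_zero, zero_mul]
    rw [lintegral_congr hrw]
    have hindmeas2 : Measurable (Set.indicator (Set.Icc (n/(2*R)) (n/R))
        (fun t : ℝ => ENNReal.ofReal ((t^(d+1))⁻¹))) :=
      Measurable.indicator ((measurable_id.pow_const (d+1)).inv.ennreal_ofReal) measurableSet_Icc
    rw [lintegral_mul_const _ hindmeas2]
    by_cases hzS : z ∈ S
    · have hn1 : 0 < n := hzS.1
      have hn2 : n ≤ 2*R := hzS.2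
      have ha0 : 0 < n/(2*R) := by positivity
      rw [Set.indicator_of_mem hzS]
      have hbound : (∫⁻ t in Set.Ioc (0:ℝ) 1,
          Set.indicator (Set.Icc (n/(2*R)) (n/R))
            (fun t => ENNReal.ofReal ((t^(d+1))⁻¹)) t ∂volume)
          ≤ ENNReal.ofReal ((2*R)^d * (n^d)⁻¹) := by
        calc (∫⁻ t in Set.Ioc (0:ℝ) 1,
            Set.indicator (Set.Icc (n/(2*R)) (n/R))
              (fun t => ENNReal.ofReal ((t^(d+1))⁻¹)) t ∂volume)
            ≤ ∫⁻ t, Set.indicator (Set.Icc (n/(2*R)) (n/R))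
                (fun t => ENNReal.ofReal ((t^(d+1))⁻¹)) t ∂volume := setLIntegral_le_lintegral _ _
          _ ≤ ∫⁻ t, Set.indicator (Set.Icc (n/(2*R)) (n/R))
                (fun _ => ENNReal.ofReal (((n/(2*R))^(d+1))⁻¹)) t ∂volume := by
              refine lintegral_mono fun t => ?_
              by_cases hmem : t ∈ Set.Icc (n/(2*R)) (n/R)
              · rw [Set.indicator_of_mem hmem, Set.indicator_of_mem hmem]
                refine ENNReal.ofReal_le_ofReal ?_
                exact inv_anti₀ (by positivity) (pow_le_pow_left₀ ha0.le hmem.1 _)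
              · rw [Set.indicator_of_notMem hmem, Set.indicator_of_notMem hmem]
          _ = ENNReal.ofReal (((n/(2*R))^(d+1))⁻¹) * volume (Set.Icc (n/(2*R)) (n/R)) := by
              rw [lintegral_indicator measurableSet_Icc, setLIntegral_const]
          _ = ENNReal.ofReal ((2*R)^d * (n^d)⁻¹) := by
              rw [Real.volume_Icc]
              have hba : n/R - n/(2*R) = n/(2*R) := by field_simp; ring
              rw [hba, ← ENNReal.ofReal_mul (by positivity)]
              congr 1
              have h2R : (2*R) ≠ 0 := by positivity
              have hnne : n ≠ 0 := hn1.ne'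
              rw [pow_succ, mul_inv, inv_mul_cancel_right₀ ha0.ne', ← inv_pow, inv_div, div_pow,
                div_eq_mul_inv]
      refine (mul_le_mul_left hbound _).trans (le_of_eq ?_)
      have hwn : (w z) ^ (1 - (d:ℝ)) = ENNReal.ofReal (n * (n^d)⁻¹) := by
        simp only [hw, ← hn]
        rw [ENNReal.ofReal_rpow_of_pos hn1]
        congr 1
        rw [Real.rpow_sub hn1, Real.rpow_one, Real.rpow_natCast]
        field_simp
      rw [hwn, ENNReal.ofReal_mul (by positivity), ENNReal.ofReal_mul (by positivity)]
      ring
    · rw [Set.indicator_of_notMem hzS]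
      have hz' : n = 0 ∨ 2*R < n := by
        rw [hS] at hzS
        simp only [Set.mem_setOf_eq, not_and, not_le] at hzS
        rcases eq_or_lt_of_le hn0 with h | h
        · exact Or.inl h.symm
        · exact Or.inr (hzS h)
      have hzero : (∫⁻ t in Set.Ioc (0:ℝ) 1,
          Set.indicator (Set.Icc (n/(2*R)) (n/R))
            (fun t => ENNReal.ofReal ((t^(d+1))⁻¹)) t ∂volume) = 0 := by
        rw [setLIntegral_congr_fun measurableSet_Ioc ?_, lintegral_zero]
        intro t ht
        refine Set.indicator_of_notMem ?_ _
        intro hmem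
        obtain ⟨hm1, hm2⟩ := hmem
        rcases hz' with h | h
        · rw [h, zero_div] at hm2
          linarith [ht.1]
        · have h1 : 1 < n/(2*R) := by
            rw [lt_div_iff₀ (by positivity)]; linarith
          linarith [ht.2]
      rw [hzero, zero_mul]
  -- Step G : combine
  have hGmeas : Measurable fun z : EuclideanSpace ℝ (Fin d) =>
      g (x0 + z) * (w z) ^ (1 - (d:ℝ)) :=
    ((hgcont.comp (continuous_const.add continuous_id)).measurable).mul
      ((ENNReal.continuous_rpow_const.comp hwcont).measurable)
  have step6 : volume A * (‖v x0‖₊ : ℝ≥0∞) ≤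
      ENNReal.ofReal ((2*R)^d) * ∫⁻ z in S, g (x0 + z) * (w z) ^ (1 - (d:ℝ)) ∂volume := by
    calc volume A * (‖v x0‖₊ : ℝ≥0∞)
        ≤ ∫⁻ y in A, ∫⁻ t in Set.Ioc (0:ℝ) 1, g (x0 + t • y) * w y ∂volume ∂volume := step1
      _ = ∫⁻ t in Set.Ioc (0:ℝ) 1, ∫⁻ y in A, g (x0 + t • y) * w y ∂volume ∂volume := step2
      _ = ∫⁻ t in Set.Ioc (0:ℝ) 1, ENNReal.ofReal ((t^(d+1))⁻¹) * ∫⁻ z, Φ t z ∂volume ∂volume :=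
          setLIntegral_congr_fun measurableSet_Ioc step3
      _ = ∫⁻ z, ∫⁻ t in Set.Ioc (0:ℝ) 1,
            ENNReal.ofReal ((t^(d+1))⁻¹) * Φ t z ∂volume ∂volume := step4
      _ ≤ ∫⁻ z, Set.indicator S (fun z => ENNReal.ofReal ((2*R)^d) *
            (g (x0 + z) * (w z) ^ (1 - (d:ℝ)))) z ∂volume := lintegral_mono step5
      _ = ENNReal.ofReal ((2*R)^d) * ∫⁻ z in S, g (x0 + z) * (w z) ^ (1 - (d:ℝ)) ∂volume := by
          rw [lintegral_indicator hSmeas, lintegral_const_mul _ hGmeas]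
  -- Step H : Cauchy-Schwarz
  have hconj : Real.HolderConjugate 2 2 := Real.HolderConjugate.two_two
  set f1 : EuclideanSpace ℝ (Fin d) → ℝ≥0∞ := fun z => g (x0 + z) * (w z) ^ (-(α/2)) with hf1
  set f2 : EuclideanSpace ℝ (Fin d) → ℝ≥0∞ := fun z => (w z) ^ (1 - (d:ℝ) + α/2) with hf2
  have hm1 : Measurable f1 := ((hgcont.comp (continuous_const.add continuous_id)).measurable).mul
    ((ENNReal.continuous_rpow_const.comp hwcont).measurable)
  have hm2 : Measurable f2 := (ENNReal.continuous_rpow_const.comp hwcont).measurable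
  have hCS := ENNReal.lintegral_mul_le_Lp_mul_Lq (volume.restrict S) hconj
    hm1.aemeasurable hm2.aemeasurable
  have heqS : ∫⁻ z in S, g (x0 + z) * (w z) ^ (1 - (d:ℝ)) ∂volume
      = ∫⁻ z in S, (f1 * f2) z ∂volume := by
    refine setLIntegral_congr_fun hSmeas (fun z hz => ?_)
    have hw0 : w z ≠ 0 := by
      simp only [hw]
      exact (ENNReal.ofReal_pos.mpr hz.1).ne'
    simp only [hf1, hf2, Pi.mul_apply]
    rw [mul_assoc, ← ENNReal.rpow_add _ _ hw0 ENNReal.ofReal_ne_top]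
    congr 2
    ring
  have hpow1 : ∫⁻ z in S, f1 z ^ (2:ℝ) ∂volume
      = ∫⁻ z in S, g (x0 + z) ^ 2 * (w z) ^ (-α) ∂volume := by
    refine lintegral_congr fun z => ?_
    simp only [hf1]
    rw [ENNReal.mul_rpow_of_nonneg _ _ (by norm_num : (0:ℝ) ≤ 2), ← ENNReal.rpow_mul]
    rw [show (-(α/2) * 2) = -α by ring]
    congr 1
    rw [show (2:ℝ) = ((2:ℕ):ℝ) by norm_num, ENNReal.rpow_natCast]
  have hpow2 : ∫⁻ z in S, f2 z ^ (2:ℝ) ∂volume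
      = ∫⁻ z in S, (w z) ^ (2 - 2*(d:ℝ) + α) ∂volume := by
    refine lintegral_congr fun z => ?_
    simp only [hf2]
    rw [← ENNReal.rpow_mul]
    congr 1
    ring
  have htrans : ∫⁻ z in S, g (x0 + z) ^ 2 * (w z) ^ (-α) ∂volume
      ≤ ∫⁻ x in Ω, g x ^ 2 * (ENNReal.ofReal ‖x - x0‖) ^ (-α) ∂volume := by
    calc ∫⁻ z in S, g (x0 + z) ^ 2 * (w z) ^ (-α) ∂volume
        ≤ ∫⁻ z, g (x0 + z) ^ 2 * (w z) ^ (-α) ∂volume := setLIntegral_le_lintegral _ _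
      _ = ∫⁻ x, g x ^ 2 * (ENNReal.ofReal ‖x - x0‖) ^ (-α) ∂volume := by
          rw [← lintegral_add_right_eq_self
            (fun x => g x ^ 2 * (ENNReal.ofReal ‖x - x0‖) ^ (-α)) x0]
          refine lintegral_congr fun z => ?_
          simp only [hw]
          rw [add_sub_cancel_right, add_comm]
      _ = ∫⁻ x in Ω, g x ^ 2 * (ENNReal.ofReal ‖x - x0‖) ^ (-α) ∂volume := by
          rw [← lintegral_indicator hΩm]
          refine lintegral_congr fun x => ?_
          by_cases hx : x ∈ Ω
          · rw [Set.indicator_of_mem hx]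
          · rw [Set.indicator_of_notMem hx, hgz x hx]
            simp
  calc volume A * (‖v x0‖₊ : ℝ≥0∞)
      ≤ ENNReal.ofReal ((2*R)^d) * ∫⁻ z in S, g (x0 + z) * (w z) ^ (1 - (d:ℝ)) ∂volume := step6
    _ = ENNReal.ofReal ((2*R)^d) * ∫⁻ z in S, (f1 * f2) z ∂volume := by rw [heqS]
    _ ≤ ENNReal.ofReal ((2*R)^d) *
        ((∫⁻ z in S, f1 z ^ (2:ℝ) ∂volume) ^ (1/(2:ℝ)) *
         (∫⁻ z in S, f2 z ^ (2:ℝ) ∂volume) ^ (1/(2:ℝ))) := mul_le_mul_right hCS _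
    _ ≤ ENNReal.ofReal ((2*R)^d) *
        ((∫⁻ z in S, (w z) ^ (2 - 2*(d:ℝ) + α) ∂volume) ^ (1/2 : ℝ) *
         (∫⁻ x in Ω, g x ^ 2 * (ENNReal.ofReal ‖x - x0‖) ^ (-α) ∂volume) ^ (1/2 : ℝ)) := by
        refine mul_le_mul_right ?_ _
        rw [mul_comm]
        refine mul_le_mul' (le_of_eq (by rw [hpow2])) ?_
        refine ENNReal.rpow_le_rpow ?_ (by norm_num)
        rw [hpow1]
        exact htrans

/-- for `d ∈ {2,3}`, `α ∈ (d-2,d)` and the weight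
`ϱ_{-α}(x) = max_k |x - x_k|^{-α}`, the sum of point forces
`f = Σ_k f_k δ_{x_k}` belongs to the dual of `H¹₀(ϱ_{-α},Ω;ℝ^d)`:
`|Σ_k f_k · v(x_k)| ≤ C ‖v‖_{H¹(ϱ_{-α},Ω)}` for all `v ∈ C₀^∞(Ω;ℝ^d)`. -/
theorem point_forces_in_dual (d K : ℕ) (hd : d = 2 ∨ d = 3) (hK : 0 < K)
    (Ω : Set (EuclideanSpace ℝ (Fin d))) (hΩ : IsLipschitzDomain Ω)
    (xs : Fin K → EuclideanSpace ℝ (Fin d)) (hxs : ∀ k, xs k ∈ Ω)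
    (fk : Fin K → EuclideanSpace ℝ (Fin d))
    (α : ℝ) (hα : α ∈ Set.Ioo ((d : ℝ) - 2) (d : ℝ)) :
    ∃ C : ℝ≥0∞, C ≠ ⊤ ∧ ∀ v : EuclideanSpace ℝ (Fin d) → EuclideanSpace ℝ (Fin d),
      ContDiff ℝ (⊤ : ℕ∞) v → tsupport v ⊆ Ω →
      (‖∑ k, ⟪fk k, v (xs k)⟫‖₊ : ℝ≥0∞) ≤ C *
        ((∫⁻ x in Ω, (‖v x‖₊ : ℝ≥0∞) ^ 2 *
            (⨆ k : Fin K, (ENNReal.ofReal ‖x - xs k‖) ^ (-α)) ∂volume) ^ (1/2 : ℝ) +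
         (∫⁻ x in Ω, (‖fderiv ℝ v x‖₊ : ℝ≥0∞) ^ 2 *
            (⨆ k : Fin K, (ENNReal.ofReal ‖x - xs k‖) ^ (-α)) ∂volume) ^ (1/2 : ℝ)) := by
  obtain ⟨hΩopen, hΩbdd, -⟩ := hΩ
  have hd0 : 0 < d := by rcases hd with h | h <;> omega
  have hd2 : 2 ≤ d := by rcases hd with h | h <;> omega
  obtain ⟨hα1, hα2⟩ := hα
  obtain ⟨r, hr⟩ := hΩbdd.subset_closedBall 0
  have hr0 : 0 ≤ r := by
    have h := hr (hxs ⟨0, hK⟩)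
    rw [Metric.mem_closedBall] at h
    exact le_trans dist_nonneg h
  set R : ℝ := 2*r + 1 with hRdef
  have hR : 0 < R := by rw [hRdef]; linarith
  have hΩR : ∀ k, Ω ⊆ Metric.ball (xs k) R := by
    intro k x hx
    have h1 := hr hx
    have h2 := hr (hxs k)
    rw [Metric.mem_closedBall, dist_zero_right] at h1 h2
    rw [Metric.mem_ball, dist_eq_norm]
    calc ‖x - xs k‖ ≤ ‖x‖ + ‖xs k‖ := norm_sub_le _ _
      _ ≤ r + r := add_le_add h1 h2
      _ < R := by rw [hRdef]; linarith
  have hΩm : MeasurableSet Ω := hΩopen.measurableSet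
  set A : Set (EuclideanSpace ℝ (Fin d)) := {y | ‖y‖ ∈ Set.Icc R (2*R)} with hA
  have hμA0 : volume A ≠ 0 := by
    have hopen : IsOpen {y : EuclideanSpace ℝ (Fin d) | ‖y‖ ∈ Set.Ioo R (2*R)} :=
      isOpen_Ioo.preimage continuous_norm
    have hne : {y : EuclideanSpace ℝ (Fin d) | ‖y‖ ∈ Set.Ioo R (2*R)}.Nonempty := by
      refine ⟨(3/2*R) • EuclideanSpace.single (⟨0, hd0⟩ : Fin d) (1:ℝ), ?_⟩
      have hnorm : ‖(3/2*R) • EuclideanSpace.single (⟨0, hd0⟩ : Fin d) (1:ℝ)‖ = 3/2*R := by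
        rw [norm_smul, EuclideanSpace.norm_single]
        rw [Real.norm_eq_abs, abs_of_pos (by linarith), norm_one, mul_one]
      show ‖_‖ ∈ Set.Ioo R (2*R)
      rw [hnorm]
      constructor <;> linarith
    intro h
    have hsub : {y : EuclideanSpace ℝ (Fin d) | ‖y‖ ∈ Set.Ioo R (2*R)} ⊆ A :=
      fun y hy => ⟨hy.1.le, hy.2.le⟩
    exact (hopen.measure_pos volume hne).ne' (measure_mono_null hsub h)
  have hμAtop : volume A ≠ ⊤ := by
    have hsub : A ⊆ Metric.closedBall 0 (2*R) := fun y hy => by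
      rw [Metric.mem_closedBall, dist_zero_right]; exact hy.2
    exact ((measure_mono hsub).trans_lt measure_closedBall_lt_top).ne
  set J := ∫⁻ z in {z : EuclideanSpace ℝ (Fin d) | 0 < ‖z‖ ∧ ‖z‖ ≤ 2*R},
      (ENNReal.ofReal ‖z‖) ^ (2 - 2*(d:ℝ) + α) ∂volume with hJ
  have hJtop : J < ⊤ := by
    refine aux_J_lt_top d _ (2*R) ?_ ?_ (by linarith)
    · linarith
    · have h2 : (2:ℝ) ≤ (d:ℝ) := by exact_mod_cast hd2
      have h3 : α < (d:ℝ) := hα2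
      linarith
  set c0 : ℝ≥0∞ := (volume A)⁻¹ * (ENNReal.ofReal ((2*R)^d) * J ^ (1/2:ℝ)) with hc0
  have hc0top : c0 ≠ ⊤ := by
    refine ENNReal.mul_ne_top (ENNReal.inv_ne_top.mpr hμA0)
      (ENNReal.mul_ne_top ENNReal.ofReal_ne_top ?_)
    exact ENNReal.rpow_ne_top_of_nonneg (by norm_num) hJtop.ne
  refine ⟨(∑ k, (‖fk k‖₊ : ℝ≥0∞)) * c0, ?_, ?_⟩
  · refine ENNReal.mul_ne_top ?_ hc0top
    exact (ENNReal.sum_lt_top.mpr (fun k _ => ENNReal.coe_lt_top)).ne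
  intro v hv hsupp
  set B := ∫⁻ x in Ω, (‖fderiv ℝ v x‖₊ : ℝ≥0∞) ^ 2 *
      (⨆ k : Fin K, (ENNReal.ofReal ‖x - xs k‖) ^ (-α)) ∂volume with hB
  have hk : ∀ k, (‖v (xs k)‖₊ : ℝ≥0∞) ≤ c0 * B ^ (1/2:ℝ) := by
    intro k
    have h1 := point_bound d α R hR Ω hΩm (xs k) (hΩR k) v hv hsupp
    have hIB : (∫⁻ x in Ω, (‖fderiv ℝ v x‖₊ : ℝ≥0∞) ^ 2 *
          (ENNReal.ofReal ‖x - xs k‖) ^ (-α) ∂volume) ≤ B := by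
      refine lintegral_mono fun x => ?_
      exact mul_le_mul_right (le_iSup (fun k => (ENNReal.ofReal ‖x - xs k‖) ^ (-α)) k) _
    have h2 : volume A * (‖v (xs k)‖₊ : ℝ≥0∞)
        ≤ ENNReal.ofReal ((2*R)^d) * (J ^ (1/2:ℝ) * B ^ (1/2:ℝ)) := by
      refine h1.trans ?_
      refine mul_le_mul_right (mul_le_mul_right ?_ _) _
      exact ENNReal.rpow_le_rpow hIB (by norm_num)
    calc (‖v (xs k)‖₊ : ℝ≥0∞)
        = (volume A)⁻¹ * (volume A * (‖v (xs k)‖₊ : ℝ≥0∞)) := by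
          rw [← mul_assoc, ENNReal.inv_mul_cancel hμA0 hμAtop, one_mul]
      _ ≤ (volume A)⁻¹ * (ENNReal.ofReal ((2*R)^d) * (J ^ (1/2:ℝ) * B ^ (1/2:ℝ))) :=
          mul_le_mul_right h2 _
      _ = c0 * B ^ (1/2:ℝ) := by rw [hc0]; ring
  calc (‖∑ k, ⟪fk k, v (xs k)⟫‖₊ : ℝ≥0∞)
      ≤ ∑ k, (‖⟪fk k, v (xs k)⟫‖₊ : ℝ≥0∞) := by
        refine le_trans (ENNReal.coe_le_coe.mpr (nnnorm_sum_le _ _)) ?_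
        rw [ENNReal.coe_finset_sum]
    _ ≤ ∑ k, (‖fk k‖₊ : ℝ≥0∞) * (‖v (xs k)‖₊ : ℝ≥0∞) := by
        refine Finset.sum_le_sum fun k _ => ?_
        refine le_trans (ENNReal.coe_le_coe.mpr (nnnorm_inner_le_nnnorm (𝕜 := ℝ)
          (fk k) (v (xs k)))) ?_
        rw [ENNReal.coe_mul]
    _ ≤ ∑ k, (‖fk k‖₊ : ℝ≥0∞) * (c0 * B ^ (1/2:ℝ)) :=
        Finset.sum_le_sum fun k _ => mul_le_mul_right (hk k) _
    _ = (∑ k, (‖fk k‖₊ : ℝ≥0∞)) * c0 * B ^ (1/2:ℝ) := by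
        rw [← Finset.sum_mul, ← mul_assoc]
    _ ≤ (∑ k, (‖fk k‖₊ : ℝ≥0∞)) * c0 *
        ((∫⁻ x in Ω, (‖v x‖₊ : ℝ≥0∞) ^ 2 *
            (⨆ k : Fin K, (ENNReal.ofReal ‖x - xs k‖) ^ (-α)) ∂volume) ^ (1/2 : ℝ) +
          B ^ (1/2 : ℝ)) := mul_le_mul_right le_add_self _
end

section
/- Let X, Y, M, Q be reflexive Banach spaces, and let 𝒜 : X×Y → ℝ, ℬ : Y×M → ℝ, 𝒞 : X×Q → ℝ be bounded bilinear forms satisfying: (i) the inf-sup condition sup_{v ∈ ker ℬ} 𝒜(w,v)/‖v‖_Y ≥ α ‖w‖_X for all w ∈ ker 𝒞 with α > 0; (ii) for v ∈ ker ℬ, if 𝒜(w,v) = 0 for all w ∈ ker 𝒞 then v = 0; (iii) sup_{v ∈ Y} ℬ(v,r)/‖v‖_Y ≥ β ‖r‖_M for all r ∈ M; (iv) sup_{w ∈ X} 𝒞(w,q)/‖w‖_X ≥ γ ‖q‖_Q for all q ∈ Q. Then for every F ∈ Y′ and G ∈ Q′ there exists a unique (u,p) ∈ X×M with 𝒜(u,v)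 + ℬ(v,p) = ⟨F,v⟩ for all v ∈ Y and 𝒞(u,q) = ⟨G,q⟩ for all q ∈ Q, with continuous dependence on the data. -/
open NormedSpace

/-- From approximate controlled solvability to exact controlled solvability,
via the standard series iteration (as in the open mapping theorem). -/
lemma exact_of_approx {E W : Type*}
    [NormedAddCommGroup E] [NormedSpace ℝ E] [CompleteSpace E]
    [NormedAddCommGroup W] [NormedSpace ℝ W]
    (S : E →L[ℝ] W) (K : ℝ) (hK : 0 ≤ K)
    (happ : ∀ g : W, ∀ ε : ℝ, 0 < ε → ∃ w : E, ‖w‖ ≤ K * ‖g‖ ∧ ‖g - S w‖ ≤ ε) :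
    ∀ g : W, ∃ w : E, S w = g ∧ ‖w‖ ≤ 2 * K * ‖g‖ := by
  intro g
  by_cases hg : g = 0
  · exact ⟨0, by simp [hg], by simp [hg]⟩
  have hgpos : 0 < ‖g‖ := norm_pos_iff.2 hg
  have H3 : ∀ (g' : W) (n : ℕ), ∃ w : E, ‖w‖ ≤ K * ‖g'‖ ∧ ‖g' - S w‖ ≤ ‖g‖ / 2 ^ (n + 1) := by
    intro g' n
    exact happ g' _ (by positivity)
  choose pick hp1 hp2 using H3
  set res : ℕ → W := fun n => Nat.rec g (fun n gn => gn - S (pick gn n)) n with hres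
  have hres0 : res 0 = g := rfl
  have hresS : ∀ n, res (n + 1) = res n - S (pick (res n) n) := fun n => rfl
  have hbnd : ∀ n, ‖res n‖ ≤ ‖g‖ / 2 ^ n := by
    intro n
    cases n with
    | zero => rw [hres0]; simp
    | succ m => rw [hresS m]; exact hp2 (res m) m
  set w : ℕ → E := fun n => pick (res n) n with hw
  have hwbnd : ∀ n, ‖w n‖ ≤ K * ‖g‖ * (1 / 2) ^ n := by
    intro n
    calc ‖w n‖ ≤ K * ‖res n‖ := hp1 (res n) n
      _ ≤ K * (‖g‖ / 2 ^ n) := by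
          exact mul_le_mul_of_nonneg_left (hbnd n) hK
      _ = K * ‖g‖ * (1 / 2) ^ n := by
          rw [div_pow, one_pow]; ring
  have hsummaj : Summable (fun n : ℕ => K * ‖g‖ * (1 / 2) ^ n) :=
    (summable_geometric_two).mul_left _
  have hsum : Summable w :=
    Summable.of_norm_bounded hsummaj hwbnd
  refine ⟨∑' n, w n, ?_, ?_⟩
  · -- S (∑ w) = g
    have hmap : S (∑' n, w n) = ∑' n, S (w n) := S.map_tsum hsum
    have hsum2 : Summable (fun n => S (w n)) :=
      hsum.map (S : E →ₗ[ℝ] W).toAddMonoidHom S.continuous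
    have htend : Filter.Tendsto (fun n => ∑ k ∈ Finset.range n, S (w k))
        Filter.atTop (nhds g) := by
      have heq : ∀ n, ∑ k ∈ Finset.range n, S (w k) = g - res n := by
        intro n
        have : ∀ k, S (w k) = res k - res (k + 1) := by
          intro k; rw [hresS k]; abel
        simp_rw [this]
        rw [Finset.sum_range_sub' res n, hres0]
      simp_rw [heq]
      have hres_to : Filter.Tendsto res Filter.atTop (nhds 0) := by
        apply squeeze_zero_norm hbnd
        have : Filter.Tendsto (fun n : ℕ => ‖g‖ * (1 / 2) ^ n) Filter.atTop (nhds 0) := by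
          simpa using (tendsto_pow_atTop_nhds_zero_of_lt_one (by norm_num : (0:ℝ) ≤ 1/2)
            (by norm_num)).const_mul ‖g‖
        convert this using 2 with n
        rw [div_pow, one_pow]; ring
      simpa using tendsto_const_nhds.sub hres_to
    have := hsum2.hasSum.tendsto_sum_nat
    rw [hmap]
    exact tendsto_nhds_unique this htend
  · have hns : Summable (fun n => ‖w n‖) :=
      Summable.of_nonneg_of_le (fun n => norm_nonneg _) hwbnd hsummaj
    calc ‖∑' n, w n‖ ≤ ∑' n, ‖w n‖ := norm_tsum_le_tsum_norm hns
      _ ≤ ∑' n, K * ‖g‖ * (1 / 2) ^ n := Summable.tsum_le_tsum hwbnd hns hsummaj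
      _ = K * ‖g‖ * 2 := by rw [tsum_mul_left, tsum_geometric_two]
      _ = 2 * K * ‖g‖ := by ring

/-- If the "pre-adjoint" of `S : E →L (Z →L ℝ)` is bounded below and `Z` is reflexive,
then every functional can be approximately solved with control `γ⁻¹`. -/
lemma approx_of_infsup {E Z : Type*}
    [NormedAddCommGroup E] [NormedSpace ℝ E]
    [NormedAddCommGroup Z] [NormedSpace ℝ Z]
    (S : E →L[ℝ] Z →L[ℝ] ℝ) (γ : ℝ) (hγ : 0 < γ)
    (hrefl : Function.Surjective (inclusionInDoubleDual ℝ Z))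
    (hlow : ∀ z : Z, γ * ‖z‖ ≤ ‖S.flip z‖) :
    ∀ (g : Z →L[ℝ] ℝ) (ε : ℝ), 0 < ε → ∃ w : E, ‖w‖ ≤ γ⁻¹ * ‖g‖ ∧ ‖g - S w‖ ≤ ε := by
  intro g ε hε
  by_cases hg : g = 0
  · exact ⟨0, by simp [hg], by simp [hg]; linarith⟩
  have hgpos : 0 < ‖g‖ := norm_pos_iff.2 hg
  set R : ℝ := γ⁻¹ * ‖g‖ with hR
  have hRpos : 0 < R := by positivity
  set s : Set (Z →L[ℝ] ℝ) := closure (S '' Metric.closedBall 0 R) with hs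
  have hconv : Convex ℝ s :=
    ((convex_closedBall (0:E) R).linear_image (S : E →ₗ[ℝ] Z →L[ℝ] ℝ)).closure
  have hclosed : IsClosed s := isClosed_closure
  have hmem : g ∈ s := by
    by_contra hgs
    obtain ⟨Φ, u, hsep, hgu⟩ := geometric_hahn_banach_closed_point hconv hclosed hgs
    obtain ⟨q, hq⟩ := hrefl Φ
    have hΦ : ∀ h : Z →L[ℝ] ℝ, Φ h = h q := by
      intro h; rw [← hq]; rfl
    have hmemS : ∀ w : E, ‖w‖ ≤ R → S w ∈ s := by
      intro w hw
      exact subset_closure ⟨w, by simpa [Metric.mem_closedBall, dist_zero_right] using hw, rfl⟩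
    have hu0 : 0 < u := by
      have := hsep (S 0) (hmemS 0 (by simp [le_of_lt hRpos]))
      simpa [hΦ] using this
    have hq0 : q ≠ 0 := by
      intro h
      rw [h] at hΦ
      have := hgu
      rw [hΦ g] at this
      simp at this
      linarith
    -- bound ‖S.flip q‖ ≤ u / R
    have hb : ∀ w : E, |S w q| ≤ u / R * ‖w‖ := by
      intro w
      rcases eq_or_ne w 0 with h0 | h0
      · simp [h0]
      have hwpos : 0 < ‖w‖ := norm_pos_iff.2 h0
      set c : ℝ := R / ‖w‖ with hc
      have hcpos : 0 < c := by positivity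
      have hnorm : ‖c • w‖ = R := by
        rw [norm_smul, Real.norm_eq_abs, abs_of_pos hcpos, hc]
        field_simp
      have h1 : S (c • w) q < u := by
        have := hsep _ (hmemS (c • w) (le_of_eq hnorm))
        rwa [hΦ] at this
      have h2 : S (-(c • w)) q < u := by
        have := hsep _ (hmemS (-(c • w)) (by rw [norm_neg]; exact le_of_eq hnorm))
        rwa [hΦ] at this
      have h1' : c * S w q < u := by simpa using h1
      have h2' : -(c * S w q) < u := by simpa using h2
      have habs : |c * S w q| ≤ u := abs_le.2 ⟨by linarith, by linarith⟩
      rw [abs_mul, abs_of_pos hcpos] at habs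
      rw [hc] at habs
      calc |S w q| = (R / ‖w‖ * |S w q|) * (‖w‖ / R) := by field_simp
        _ ≤ u * (‖w‖ / R) := by
            apply mul_le_mul_of_nonneg_right habs (by positivity)
        _ = u / R * ‖w‖ := by ring
    have hnormflip : ‖S.flip q‖ ≤ u / R := by
      apply ContinuousLinearMap.opNorm_le_bound _ (by positivity)
      intro w
      simpa [Real.norm_eq_abs] using hb w
    have hqpos : 0 < ‖q‖ := norm_pos_iff.2 hq0
    have h3 : γ * ‖q‖ * R ≤ u := by
      have := (hlow q).trans hnormflip
      calc γ * ‖q‖ * R ≤ u / R * R := by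
            apply mul_le_mul_of_nonneg_right this (le_of_lt hRpos)
        _ = u := by field_simp
    have h4 : u < ‖g‖ * ‖q‖ := by
      have hgq : Φ g ≤ ‖g‖ * ‖q‖ := by
        rw [hΦ]
        exact (le_abs_self _).trans (g.le_opNorm q)
      linarith [hgu]
    have h5 : γ * ‖q‖ * R = ‖g‖ * ‖q‖ := by
      rw [hR]; field_simp
    linarith
  -- extract approximation
  rw [Metric.mem_closure_iff] at hmem
  obtain ⟨y, hy, hdist⟩ := hmem ε hε
  obtain ⟨w, hw, rfl⟩ := hy
  refine ⟨w, by simpa [Metric.mem_closedBall, dist_zero_right] using hw, ?_⟩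
  rw [← dist_eq_norm]
  exact le_of_lt hdist

/-- A subspace (given as the range of a continuous linear map) on which every
continuous functional that vanishes is zero... rather: if every functional
vanishing on the range forces a contradiction, the range is dense. Here we
package the separation argument: if the range is not dense, there is a nonzero
continuous functional vanishing on it. -/
lemma exists_functional_of_not_dense {E W : Type*}
    [NormedAddCommGroup E] [NormedSpace ℝ E]
    [NormedAddCommGroup W] [NormedSpace ℝ W]
    (T : E →L[ℝ] W) (hnd : ¬ Dense (Set.range T)) :
    ∃ Φ : W →L[ℝ] ℝ, (∀ e : E, Φ (T e) = 0) ∧ Φ ≠ 0 := by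
  rw [dense_iff_closure_eq] at hnd
  have hx : ∃ x : W, x ∉ closure (Set.range T) := by
    by_contra h
    push_neg at h
    exact hnd (Set.eq_univ_of_forall h)
  obtain ⟨x, hx⟩ := hx
  have hconv : Convex ℝ (Set.range ⇑T) := by
    intro a ha b hb s t hs ht hst
    obtain ⟨ea, rfl⟩ := ha
    obtain ⟨eb, rfl⟩ := hb
    exact ⟨s • ea + t • eb, by simp [map_add, map_smul]⟩
  obtain ⟨Φ, u, hsep, hxu⟩ :=
    geometric_hahn_banach_closed_point hconv.closure isClosed_closure hx
  have hu0 : 0 < u := by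
    have := hsep (T 0) (subset_closure ⟨0, rfl⟩)
    simpa using this
  refine ⟨Φ, ?_, ?_⟩
  · intro e
    by_contra h
    have := hsep (T ((u / Φ (T e)) • e)) (subset_closure ⟨_, rfl⟩)
    rw [map_smul, map_smul, smul_eq_mul, div_mul_cancel₀ _ h] at this
    exact lt_irrefl _ this
  · intro h
    rw [h] at hxu
    simp at hxu
    linarith

lemma key_bound {X Y M Q : Type*}
    [NormedAddCommGroup X] [NormedSpace ℝ X]
    [NormedAddCommGroup Y] [NormedSpace ℝ Y]
    [NormedAddCommGroup M] [NormedSpace ℝ M]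
    [NormedAddCommGroup Q] [NormedSpace ℝ Q]
    (A : X →L[ℝ] Y →L[ℝ] ℝ) (B : Y →L[ℝ] M →L[ℝ] ℝ) (Cf : X →L[ℝ] Q →L[ℝ] ℝ)
    (α β γ : ℝ) (hα : 0 < α) (hβ : 0 < β) (hγ : 0 < γ)
    (hA1 : ∀ w : X, (∀ q : Q, Cf w q = 0) → ∀ c : ℝ,
      (∀ v : Y, (∀ r : M, B v r = 0) → A w v ≤ c * ‖v‖) → α * ‖w‖ ≤ c)
    (hB : ∀ r : M, ∀ c : ℝ, (∀ v : Y, B v r ≤ c * ‖v‖) → β * ‖r‖ ≤ c)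
    (hCsurj : ∀ g : Q →L[ℝ] ℝ, ∃ w : X, Cf w = g ∧ ‖w‖ ≤ 2 * γ⁻¹ * ‖g‖)
    (w : X) (r : M) (N : ℝ) (hN0 : 0 ≤ N)
    (hf1 : ‖A w + B.flip r‖ ≤ N) (hf2 : ‖Cf w‖ ≤ N) :
    ‖w‖ ≤ ((1 + ‖A‖ * (2 * γ⁻¹)) / α + 2 * γ⁻¹) * N ∧
      ‖r‖ ≤ ((1 + ‖A‖ * ((1 + ‖A‖ * (2 * γ⁻¹)) / α + 2 * γ⁻¹)) / β) * N := by
  have hnA0 : (0:ℝ) ≤ ‖A‖ := norm_nonneg A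
  obtain ⟨w₁, hw₁eq, hw₁n⟩ := hCsurj (Cf w)
  have hw₁N : ‖w₁‖ ≤ 2 * γ⁻¹ * N :=
    hw₁n.trans (mul_le_mul_of_nonneg_left hf2 (by positivity))
  have hker : ∀ q : Q, Cf (w - w₁) q = 0 := by
    intro q
    rw [map_sub, hw₁eq]
    simp
  have hstep1 : α * ‖w - w₁‖ ≤ ‖A w + B.flip r‖ + ‖A‖ * ‖w₁‖ := by
    apply hA1 _ hker
    intro v hv
    have h1 : A (w - w₁) v = (A w + B.flip r) v - A w₁ v := by
      rw [map_sub]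
      simp [hv r]
    have h2 : (A w + B.flip r) v ≤ ‖A w + B.flip r‖ * ‖v‖ :=
      (le_abs_self _).trans ((A w + B.flip r).le_opNorm v)
    have h3 : -(A w₁ v) ≤ ‖A‖ * ‖w₁‖ * ‖v‖ := by
      have h := A.le_opNorm₂ w₁ v
      rw [Real.norm_eq_abs] at h
      have := neg_le_of_abs_le h
      linarith
    rw [h1, add_mul]
    linarith
  have hw0N : ‖w - w₁‖ ≤ (N + ‖A‖ * (2 * γ⁻¹ * N)) / α := by
    rw [le_div_iff₀ hα]
    have h : ‖A w + B.flip r‖ + ‖A‖ * ‖w₁‖ ≤ N + ‖A‖ * (2 * γ⁻¹ * N) := by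
      have := mul_le_mul_of_nonneg_left hw₁N hnA0
      linarith
    calc ‖w - w₁‖ * α = α * ‖w - w₁‖ := by ring
      _ ≤ _ := hstep1.trans h
  have h4 : ‖w‖ ≤ ‖w - w₁‖ + ‖w₁‖ := by
    have h : w - w₁ + w₁ = w := by abel
    calc ‖w‖ = ‖w - w₁ + w₁‖ := by rw [h]
      _ ≤ ‖w - w₁‖ + ‖w₁‖ := norm_add_le _ _
  have h5 : (N + ‖A‖ * (2 * γ⁻¹ * N)) / α + 2 * γ⁻¹ * N
      = ((1 + ‖A‖ * (2 * γ⁻¹)) / α + 2 * γ⁻¹) * N := by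
    field_simp
  have hwN : ‖w‖ ≤ ((1 + ‖A‖ * (2 * γ⁻¹)) / α + 2 * γ⁻¹) * N := by
    linarith
  refine ⟨hwN, ?_⟩
  have h6 : β * ‖r‖ ≤ ‖A w + B.flip r‖ + ‖A‖ * ‖w‖ := by
    apply hB r
    intro v
    have h7 : B v r = (A w + B.flip r) v - A w v := by simp
    have h2 : (A w + B.flip r) v ≤ ‖A w + B.flip r‖ * ‖v‖ :=
      (le_abs_self _).trans ((A w + B.flip r).le_opNorm v)
    have h3 : -(A w v) ≤ ‖A‖ * ‖w‖ * ‖v‖ := by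
      have h := A.le_opNorm₂ w v
      rw [Real.norm_eq_abs] at h
      have := neg_le_of_abs_le h
      linarith
    rw [h7, add_mul]
    linarith
  have h8 : ‖A w + B.flip r‖ + ‖A‖ * ‖w‖
      ≤ N + ‖A‖ * (((1 + ‖A‖ * (2 * γ⁻¹)) / α + 2 * γ⁻¹) * N) := by
    have := mul_le_mul_of_nonneg_left hwN hnA0
    linarith
  have h9 : ‖r‖ ≤ (N + ‖A‖ * (((1 + ‖A‖ * (2 * γ⁻¹)) / α + 2 * γ⁻¹) * N)) / β := by
    rw [le_div_iff₀ hβ]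
    calc ‖r‖ * β = β * ‖r‖ := by ring
      _ ≤ _ := h6.trans h8
  have h10 : (N + ‖A‖ * (((1 + ‖A‖ * (2 * γ⁻¹)) / α + 2 * γ⁻¹) * N)) / β
      = ((1 + ‖A‖ * ((1 + ‖A‖ * (2 * γ⁻¹)) / α + 2 * γ⁻¹)) / β) * N := by
    field_simp
  linarith

set_option maxHeartbeats 1000000

/-- well posedness of the generalized (twofold) saddle point problem
of Bernardi–Canuto–Maday type. `X, Y, M, Q` are reflexive Banach spaces
(reflexivity expressed by surjectivity of the canonical embedding in the bidual),
`𝒜, ℬ, 𝒞` bounded bilinear forms. The inf-sup conditions (i)–(iv) imply that for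
all data `F ∈ Y'`, `G ∈ Q'` the problem has a unique solution depending
continuously on the data. (Inf-sup conditions are phrased as: any bound `c` for
the linear functional dominates the corresponding dual norm.) -/
theorem generalized_saddle_point_wellposed
    {X Y M Q : Type*}
    [NormedAddCommGroup X] [NormedSpace ℝ X] [CompleteSpace X]
    [NormedAddCommGroup Y] [NormedSpace ℝ Y] [CompleteSpace Y]
    [NormedAddCommGroup M] [NormedSpace ℝ M] [CompleteSpace M]
    [NormedAddCommGroup Q] [NormedSpace ℝ Q] [CompleteSpace Q]
    (hreflX : Function.Surjective (inclusionInDoubleDual ℝ X))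
    (hreflY : Function.Surjective (inclusionInDoubleDual ℝ Y))
    (hreflM : Function.Surjective (inclusionInDoubleDual ℝ M))
    (hreflQ : Function.Surjective (inclusionInDoubleDual ℝ Q))
    (A : X →L[ℝ] Y →L[ℝ] ℝ) (B : Y →L[ℝ] M →L[ℝ] ℝ) (Cf : X →L[ℝ] Q →L[ℝ] ℝ)
    (α β γ : ℝ) (hα : 0 < α) (hβ : 0 < β) (hγ : 0 < γ)
    -- (i) inf-sup for 𝒜 over the kernels:  sup_{v ∈ ker ℬ} 𝒜(w,v)/‖v‖ ≥ α‖w‖, w ∈ ker 𝒞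
    (hA1 : ∀ w : X, (∀ q : Q, Cf w q = 0) → ∀ c : ℝ,
      (∀ v : Y, (∀ r : M, B v r = 0) → A w v ≤ c * ‖v‖) → α * ‖w‖ ≤ c)
    -- (ii) nondegeneracy of 𝒜 on ker ℬ
    (hA2 : ∀ v : Y, (∀ r : M, B v r = 0) →
      ((∀ w : X, (∀ q : Q, Cf w q = 0) → A w v = 0) → v = 0))
    -- (iii) inf-sup for ℬ:  sup_{v ∈ Y} ℬ(v,r)/‖v‖ ≥ β‖r‖
    (hB : ∀ r : M, ∀ c : ℝ, (∀ v : Y, B v r ≤ c * ‖v‖) → β * ‖r‖ ≤ c)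
    -- (iv) inf-sup for 𝒞:  sup_{w ∈ X} 𝒞(w,q)/‖w‖ ≥ γ‖q‖
    (hC : ∀ q : Q, ∀ c : ℝ, (∀ w : X, Cf w q ≤ c * ‖w‖) → γ * ‖q‖ ≤ c) :
    ∃ Cst : ℝ, 0 < Cst ∧ ∀ (F : Y →L[ℝ] ℝ) (G : Q →L[ℝ] ℝ),
      (∃! up : X × M,
        (∀ v : Y, A up.1 v + B v up.2 = F v) ∧ (∀ q : Q, Cf up.1 q = G q)) ∧
      (∀ up : X × M,
        ((∀ v : Y, A up.1 v + B v up.2 = F v) ∧ (∀ q : Q, Cf up.1 q = G q)) →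
        ‖up.1‖ + ‖up.2‖ ≤ Cst * (‖F‖ + ‖G‖)) := by
  -- quantitative surjectivity of `Cf : X →L Q'`
  have hC' : ∀ q : Q, γ * ‖q‖ ≤ ‖Cf.flip q‖ := by
    intro q
    apply hC q
    intro w
    calc Cf w q = Cf.flip q w := rfl
      _ ≤ |Cf.flip q w| := le_abs_self _
      _ ≤ ‖Cf.flip q‖ * ‖w‖ := (Cf.flip q).le_opNorm w
  have hCsurj : ∀ g : Q →L[ℝ] ℝ, ∃ w : X, Cf w = g ∧ ‖w‖ ≤ 2 * γ⁻¹ * ‖g‖ :=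
    exact_of_approx Cf γ⁻¹ (by positivity)
      (approx_of_infsup Cf γ hγ hreflQ hC')
  -- the global operator T : X × M → Y' × Q'
  set T : (X × M) →L[ℝ] ((Y →L[ℝ] ℝ) × (Q →L[ℝ] ℝ)) :=
    ((A.comp (ContinuousLinearMap.fst ℝ X M)) + (B.flip.comp (ContinuousLinearMap.snd ℝ X M))).prod (Cf.comp (ContinuousLinearMap.fst ℝ X M)) with hT
  have hTapp : ∀ e : X × M, T e = (A e.1 + B.flip e.2, Cf e.1) := fun e => rfl
  -- the global inf-sup bound
  set K1 : ℝ := (1 + ‖A‖ * (2 * γ⁻¹)) / α + 2 * γ⁻¹ with hK1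
  set K2 : ℝ := (1 + ‖A‖ * K1) / β with hK2
  have hK1pos : 0 < K1 := by positivity
  have hK2pos : 0 < K2 := by positivity
  set K : ℝ := K1 + K2 + 1 with hKdef
  have hKpos : 0 < K := by positivity
  have hK1K : K1 ≤ K := by rw [hKdef]; linarith
  have hK2K : K2 ≤ K := by rw [hKdef]; linarith
  have hbb : ∀ e : X × M, ‖e‖ ≤ K * ‖T e‖ := by
    rintro ⟨w, r⟩
    have hf1 : ‖A w + B.flip r‖ ≤ ‖T (w, r)‖ := by
      rw [hTapp (w, r)]
      exact norm_fst_le (A w + B.flip r, Cf w)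
    have hf2 : ‖Cf w‖ ≤ ‖T (w, r)‖ := by
      rw [hTapp (w, r)]
      exact norm_snd_le (A w + B.flip r, Cf w)
    obtain ⟨h1, h2⟩ := key_bound A B Cf α β γ hα hβ hγ hA1 hB hCsurj w r
      ‖T (w, r)‖ (norm_nonneg _) hf1 hf2
    have hmax : ‖(w, r)‖ = max ‖w‖ ‖r‖ := rfl
    rw [hmax]
    apply max_le
    · exact h1.trans (mul_le_mul_of_nonneg_right hK1K (norm_nonneg _))
    · exact h2.trans (mul_le_mul_of_nonneg_right hK2K (norm_nonneg _))
  -- antilipschitz, injectivity, closed range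
  have hbb' : ∀ e : X × M, ‖e‖ ≤ (K.toNNReal : ℝ) * ‖T e‖ := by
    intro e
    rw [Real.coe_toNNReal _ hKpos.le]
    exact hbb e
  have hanti : AntilipschitzWith K.toNNReal T := T.antilipschitz_of_bound hbb'
  have hinj : Function.Injective T := hanti.injective
  have hclosed : IsClosed (Set.range ⇑T) := hanti.isClosed_range T.uniformContinuous
  -- dense range
  have hdense : Dense (Set.range ⇑T) := by
    by_contra hnd
    obtain ⟨Φ, hvan, hΦne⟩ := exists_functional_of_not_dense T hnd
    set Φ₁ : (Y →L[ℝ] ℝ) →L[ℝ] ℝ := Φ.comp (ContinuousLinearMap.inl ℝ _ _) with hΦ₁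
    set Φ₂ : (Q →L[ℝ] ℝ) →L[ℝ] ℝ := Φ.comp (ContinuousLinearMap.inr ℝ _ _) with hΦ₂
    have hsplit : ∀ (a : Y →L[ℝ] ℝ) (b : Q →L[ℝ] ℝ), Φ (a, b) = Φ₁ a + Φ₂ b := by
      intro a b
      have h : (a, b) = ((a, 0) : (Y →L[ℝ] ℝ) × (Q →L[ℝ] ℝ)) + (0, b) := by simp
      rw [h, map_add]
      rfl
    obtain ⟨v₀, hv₀⟩ := hreflY Φ₁
    obtain ⟨q₀, hq₀⟩ := hreflQ Φ₂
    have hΦ₁app : ∀ a : Y →L[ℝ] ℝ, Φ₁ a = a v₀ := by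
      intro a; rw [← hv₀]; rfl
    have hΦ₂app : ∀ b : Q →L[ℝ] ℝ, Φ₂ b = b q₀ := by
      intro b; rw [← hq₀]; rfl
    have key : ∀ (w : X) (r : M), A w v₀ + B v₀ r + Cf w q₀ = 0 := by
      intro w r
      have h := hvan (w, r)
      rw [hTapp (w, r), hsplit, hΦ₁app, hΦ₂app] at h
      simpa [add_assoc] using h
    have hkerB : ∀ r : M, B v₀ r = 0 := by
      intro r
      have h := key 0 r
      simpa using h
    have hv0 : v₀ = 0 := by
      apply hA2 v₀ hkerB
      intro w hw
      have h := key w 0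
      rw [hw q₀] at h
      simpa using h
    have hq0 : q₀ = 0 := by
      have hz : ∀ w : X, Cf w q₀ = 0 := by
        intro w
        have h := key w 0
        rw [hv0] at h
        simpa using h
      have h := hC q₀ 0 (fun w => by rw [hz w, zero_mul])
      have hq0n : ‖q₀‖ ≤ 0 := by
        have h2 : γ * ‖q₀‖ ≤ γ * 0 := by rwa [mul_zero]
        exact le_of_mul_le_mul_left h2 hγ
      exact norm_le_zero_iff.1 hq0n
    apply hΦne
    apply ContinuousLinearMap.ext
    intro x
    obtain ⟨a, b⟩ := x
    rw [hsplit, hΦ₁app, hΦ₂app, hv0, hq0]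
    simp
  -- surjectivity
  have hsurj : Function.Surjective T := by
    have hr : Set.range ⇑T = Set.univ := by
      rw [← hclosed.closure_eq]
      exact hdense.closure_eq
    intro y
    have hy : y ∈ Set.range ⇑T := by rw [hr]; trivial
    exact hy
  -- translation of the equations
  have heq : ∀ (up : X × M) (F : Y →L[ℝ] ℝ) (G : Q →L[ℝ] ℝ),
      (((∀ v : Y, A up.1 v + B v up.2 = F v) ∧ (∀ q : Q, Cf up.1 q = G q))
        ↔ T up = (F, G)) := by
    intro up F G
    rw [hTapp up, Prod.ext_iff]
    constructor
    · rintro ⟨h1, h2⟩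
      constructor
      · ext v; simpa using h1 v
      · ext q; exact h2 q
    · rintro ⟨h1, h2⟩
      constructor
      · intro v
        have h := congrArg (fun f => f v) h1
        simpa using h
      · intro q
        exact congrArg (fun f => f q) h2
  refine ⟨2 * K, by positivity, ?_⟩
  intro F G
  obtain ⟨e, he⟩ := hsurj (F, G)
  constructor
  · refine ⟨e, (heq e F G).2 he, ?_⟩
    intro e' he'
    exact hinj (((heq e' F G).1 he').trans he.symm)
  · intro up hup
    have hTup : T up = (F, G) := (heq up F G).1 hup
    have h1 : ‖up‖ ≤ K * ‖(F, G)‖ := by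
      have h := hbb up
      rwa [hTup] at h
    have h2 : ‖up.1‖ + ‖up.2‖ ≤ 2 * ‖up‖ := by
      have ha := norm_fst_le up
      have hb := norm_snd_le up
      linarith
    have h3 : ‖((F, G) : (Y →L[ℝ] ℝ) × (Q →L[ℝ] ℝ))‖ ≤ ‖F‖ + ‖G‖ := by
      have hm : ‖((F, G) : (Y →L[ℝ] ℝ) × (Q →L[ℝ] ℝ))‖ = max ‖F‖ ‖G‖ := rfl
      rw [hm]
      exact max_le (le_add_of_nonneg_right (norm_nonneg _))
        (le_add_of_nonneg_left (norm_nonneg _))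
    have h4 : K * ‖((F, G) : (Y →L[ℝ] ℝ) × (Q →L[ℝ] ℝ))‖ ≤ K * (‖F‖ + ‖G‖) :=
      mul_le_mul_of_nonneg_left h3 hKpos.le
    linarith
end
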